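/- arXiv:2404.06968 — 6 statements merged into one kernel-verified Lean document; each statement's English description precedes it below -/
import Mathlib

section
/- The Artin–Hasse exponential E_p(x) = exp(∑_{n≥0} x^{p^n}/p^n), a priori a power series with coefficients in ℚ_p, has all its coefficients in ℤ_(p) (the localization of ℤ at p). -/
set_option maxHeartbeats 1000000
set_option synthInstance.maxHeartbeats 400000


open PowerSeries

/-- The series `g(x) = ∑_{k≥0} x^{p^k}/p^k`. -/
noncomputable def AHlog (p : ℕ) (K : Type*) [Field K] : PowerSeries K :=
  PowerSeries.mk fun m =>
    letI := Classical.propDecidable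
    if h : ∃ k : ℕ, m = p ^ k then ((p : K) ^ h.choose)⁻¹ else 0

/-- Composition `f ∘ g` of power series (intended for `g` with zero constant term). -/
noncomputable def compPS {K : Type*} [CommRing K] (f g : PowerSeries K) : PowerSeries K :=
  PowerSeries.mk fun m => ∑ n ∈ Finset.range (m + 1),
    (PowerSeries.coeff n f) * PowerSeries.coeff m (g ^ n)

/-- The Artin–Hasse exponential `E_p(x) = exp(∑ x^{p^k}/p^k)`. -/
noncomputable def ArtinHasse (p : ℕ) (K : Type*) [Field K] [Algebra ℚ K] : PowerSeries K :=
  compPS (PowerSeries.exp K) (AHlog p K)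


open Finset

namespace AHProof

variable (p : ℕ)

/-- The subring `ℤ_(p) ⊆ ℚ` of rationals with denominator prime to `p`. -/
def S (hp : p.Prime) : Subring ℚ where
  carrier := {q : ℚ | ¬ p ∣ q.den}
  one_mem' := by simp [Nat.dvd_one, hp.ne_one]
  zero_mem' := by simp [Nat.dvd_one, hp.ne_one]
  add_mem' := by
    intro a b ha hb hd
    rcases (hp.dvd_mul.mp (hd.trans (Rat.add_den_dvd a b))) with h | h
    · exact ha h
    · exact hb h
  mul_mem' := by
    intro a b ha hb hd
    rcases (hp.dvd_mul.mp (hd.trans (Rat.mul_den_dvd a b))) with h | h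
    · exact ha h
    · exact hb h
  neg_mem' := by
    intro a ha hd
    exact ha (by simpa using hd)

variable {p} (hp : p.Prime)

theorem mem_S_iff {q : ℚ} : q ∈ S p hp ↔ ¬ p ∣ q.den := Iff.rfl

theorem div_mem_S {a : ℤ} {b : ℤ} (hb : b ≠ 0) (hpb : ¬ (p:ℤ) ∣ b) :
    (a : ℚ) / (b : ℚ) ∈ S p hp := by
  rw [mem_S_iff]
  intro hd
  apply hpb
  have h1 : (((a / b : ℚ)).den : ℤ) ∣ b := by
    have := Rat.den_dvd a b
    rwa [Rat.divInt_eq_div] at this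
  exact dvd_trans (Int.natCast_dvd_natCast.mpr hd) h1

/-- Fermat: for `s ∈ ℤ_(p)`, `s^p ≡ s mod p`. -/
theorem fermat_S {s : ℚ} (hs : s ∈ S p hp) : ∃ t ∈ S p hp, s ^ p - s = p * t := by
  haveI : Fact p.Prime := ⟨hp⟩
  set n : ℤ := s.num with hn
  set d : ℤ := (s.den : ℤ) with hd
  have hd0 : d ≠ 0 := by simp [hd, s.den_nz]
  have hdq : (d : ℚ) ≠ 0 := Int.cast_ne_zero.mpr hd0
  have hdp : ((d : ℚ)) ^ p ≠ 0 := pow_ne_zero _ hdq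
  have hp1 : p - 1 + 1 = p := Nat.succ_pred_eq_of_pos hp.pos
  have hdvd : (p : ℤ) ∣ n ^ p - n * d ^ (p - 1) := by
    have hcast : ((n ^ p - n * d ^ (p - 1) : ℤ) : ZMod p) = 0 := by
      push_cast
      have h1 : ((n : ZMod p)) ^ p = (n : ZMod p) := ZMod.pow_card _
      have h2 : ((d : ZMod p)) ^ (p - 1) = 1 := by
        apply ZMod.pow_card_sub_one_eq_one
        rw [hd]
        push_cast
        rw [Ne, ZMod.natCast_eq_zero_iff]
        exact hs
      rw [h1, h2, mul_one, sub_self]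
    exact (ZMod.intCast_zmod_eq_zero_iff_dvd _ _).mp hcast
  obtain ⟨w, hw⟩ := hdvd
  have hsnd : s = (n : ℚ) / (d : ℚ) := by
    rw [hn, hd]; exact_mod_cast (Rat.num_div_den s).symm
  have e1 : s ^ p - s = ((n ^ p - n * d ^ (p - 1) : ℤ) : ℚ) / ((d : ℚ) ^ p) := by
    rw [hsnd, div_pow, div_sub_div _ _ hdp hdq, div_eq_div_iff (mul_ne_zero hdp hdq) hdp]
    push_cast
    have hdd : ((d : ℚ)) ^ p = (d : ℚ) ^ (p - 1) * d := by rw [← pow_succ, hp1]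
    rw [hdd]; ring
  refine ⟨(w : ℚ) / ((d ^ p : ℤ) : ℚ), div_mem_S hp (pow_ne_zero _ hd0) ?_, ?_⟩
  · intro hdd
    have h := (Nat.prime_iff_prime_int.mp hp).dvd_of_dvd_pow hdd
    rw [hd, Int.natCast_dvd_natCast] at h
    exact hs h
  · rw [e1, hw]
    push_cast
    ring

theorem natCast_mem_S (n : ℕ) : (n : ℚ) ∈ S p hp := by
  rw [mem_S_iff, Rat.den_natCast]
  simp [Nat.dvd_one, hp.ne_one]

/-- The quotient `ℤ_(p)/p` has characteristic `p`. -/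
theorem charP_quot : CharP ((S p hp) ⧸ (Ideal.span {((p : ℕ) : S p hp)})) p := by
  set I := Ideal.span {((p : ℕ) : S p hp)} with hI
  have hpum : ((p : ℕ) : (S p hp) ⧸ I) = 0 := by
    have h0 : ((p : ℕ) : S p hp) ∈ I := Ideal.subset_span rfl
    rw [← map_natCast (Ideal.Quotient.mk I)]
    exact (Ideal.Quotient.eq_zero_iff_mem).mpr h0
  have h1 : ringChar ((S p hp) ⧸ I) ∣ p := ringChar.dvd hpum
  have h2 : ringChar ((S p hp) ⧸ I) ≠ 1 := by
    intro h
    have hone : ((1:ℕ) : (S p hp) ⧸ I) = 0 := by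
      rw [ringChar.spec, h]
    rw [Nat.cast_one, ← map_one (Ideal.Quotient.mk I), Ideal.Quotient.eq_zero_iff_mem,
      hI, Ideal.mem_span_singleton] at hone
    obtain ⟨t, ht⟩ := hone
    have hq : (1 : ℚ) = p * (t : ℚ) := by
      have := congrArg (Subring.subtype _) ht
      rwa [map_one, map_mul, map_natCast] at this
    have hpq : (p : ℚ) ≠ 0 := Nat.cast_ne_zero.mpr hp.ne_zero
    have htv : (t : ℚ) = 1 / p := by
      rw [eq_div_iff hpq]; linarith
    have ht2 := t.2
    rw [mem_S_iff, htv] at ht2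
    apply ht2
    rw [one_div, Rat.inv_natCast_den_of_pos hp.pos]
  rcases (Nat.dvd_prime hp).mp h1 with h | h
  · exact absurd h h2
  · have := ringChar.charP ((S p hp) ⧸ I)
    rwa [h] at this


/-- Frobenius congruence: for a polynomial with coefficients in `ℤ_(p)`,
`coeff n (q^p) ≡ coeff (n/p) q mod p`. -/
theorem frob_cong (q : Polynomial ℚ) (hq : ∀ i, q.coeff i ∈ S p hp) (n : ℕ) :
    ∃ t ∈ S p hp, (q ^ p).coeff n = (if p ∣ n then q.coeff (n / p) else 0) + p * t := by
  haveI : Fact p.Prime := ⟨hp⟩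
  have hcoeffs : (↑q.coeffs : Set ℚ) ⊆ ↑(S p hp) := by
    intro a ha
    rw [Finset.mem_coe] at ha
    obtain ⟨i, _, rfl⟩ := Polynomial.mem_coeffs_iff.mp ha
    exact hq i
  set Q := q.toSubring (S p hp) hcoeffs with hQ
  have hmap : Q.map (Subring.subtype _) = q := Polynomial.map_toSubring q (S p hp) hcoeffs
  set I := Ideal.span {((p : ℕ) : S p hp)} with hI
  haveI : CharP ((S p hp) ⧸ I) p := charP_quot hp
  haveI : ExpChar ((S p hp) ⧸ I) p := ExpChar.prime hp
  set π := Ideal.Quotient.mk I with hπ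
  have key : (Q.map π) ^ p
      = Polynomial.map (frobenius _ p) (Polynomial.expand _ p (Q.map π)) :=
    (Polynomial.map_frobenius_expand (p := p) (Q.map π)).symm
  -- Fermat in the quotient
  have hferm : ∀ x : S p hp, (π x) ^ p = π x := by
    intro x
    obtain ⟨t, ht, htt⟩ := fermat_S hp x.2
    have hxt : (x : ℚ) ^ p - (x : ℚ) = ((p : ℕ) : S p hp) * (⟨t, ht⟩ : S p hp) := by
      push_cast
      exact htt
    have hmem : x ^ p - x ∈ I := by
      rw [hI, Ideal.mem_span_singleton]
      exact ⟨⟨t, ht⟩, by ext; exact hxt⟩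
    have := Ideal.Quotient.eq_zero_iff_mem.mpr hmem
    rw [map_sub, map_pow, sub_eq_zero] at this
    exact this
  have hcn : π ((Q ^ p).coeff n) = π ((if p ∣ n then Q.coeff (n / p) else 0)) := by
    have e1 : π ((Q ^ p).coeff n) = ((Q.map π) ^ p).coeff n := by
      rw [← Polynomial.map_pow, Polynomial.coeff_map]
    rw [e1, key, Polynomial.coeff_map, Polynomial.coeff_expand hp.pos]
    split_ifs with h
    · rw [Polynomial.coeff_map, frobenius_def, hferm]
    · simp
  rw [← sub_eq_zero, ← map_sub, Ideal.Quotient.eq_zero_iff_mem, hI,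
    Ideal.mem_span_singleton] at hcn
  obtain ⟨u, hu⟩ := hcn
  refine ⟨(u : ℚ), u.2, ?_⟩
  have := congrArg (Subring.subtype _) hu
  rw [map_sub, map_mul, map_natCast] at this
  have hQq : (S p hp).subtype ((Q ^ p).coeff n) = (q ^ p).coeff n := by
    conv_rhs => rw [← hmap]
    rw [← Polynomial.map_pow, Polynomial.coeff_map]
  have hQq2 : (S p hp).subtype (Q.coeff (n / p)) = q.coeff (n / p) := by
    conv_rhs => rw [← hmap]
    rw [Polynomial.coeff_map]
  rw [apply_ite ((S p hp).subtype), map_zero, hQq, hQq2] at this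
  simp only [Subring.coe_subtype] at this
  linarith [this]

theorem sum_digits_pos (hp2 : 1 < p) : ∀ i, 0 < i → 0 < (p.digits i).sum := by
  intro i
  induction i using Nat.strong_induction_on with
  | _ i IH =>
    intro hi
    rw [Nat.digits_def' hp2 hi, List.sum_cons]
    rcases Nat.eq_zero_or_pos (i % p) with h | h
    · have hdvd : p ∣ i := Nat.dvd_of_mod_eq_zero h
      have hip : p ≤ i := Nat.le_of_dvd hi hdvd
      have h1 : 0 < i / p := Nat.div_pos hip (by omega)
      have h2 : i / p < i := Nat.div_lt_self hi hp2
      have := IH _ h2 h1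
      omega
    · omega

theorem factorial_val (hp : p.Prime) {i : ℕ} (hi : 1 ≤ i) :
    ∃ v m : ℕ, v ≤ i - 1 ∧ ¬ p ∣ m ∧ i.factorial = p ^ v * m := by
  haveI : Fact p.Prime := ⟨hp⟩
  have hfact0 : i.factorial ≠ 0 := Nat.factorial_ne_zero i
  set v := (i.factorial).factorization p with hv
  have hvp : v = padicValNat p (i.factorial) := Nat.factorization_def _ hp
  have hleg : (p - 1) * padicValNat p (i.factorial) = i - (p.digits i).sum :=
    sub_one_mul_padicValNat_factorial i
  have hs : 0 < (p.digits i).sum := sum_digits_pos hp.one_lt i hi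
  have hvle : v ≤ i - 1 := by
    have h1 : v ≤ (p - 1) * v := Nat.le_mul_of_pos_left v (by have := hp.two_le; omega)
    rw [hvp] at h1 ⊢
    omega
  refine ⟨v, i.factorial / p ^ v, hvle, ?_, ?_⟩
  · exact Nat.not_dvd_ordCompl hp hfact0
  · exact (Nat.ordProj_mul_ordCompl_eq_self (i.factorial) p).symm


section PS

open scoped Classical

variable {p : ℕ}

/-- `h = g' = ∑ x^{p^k - 1}`. -/
noncomputable def hs (p : ℕ) : PowerSeries ℚ := d⁄dX ℚ (AHlog p ℚ)

/-- dilation `F(x) ↦ F(x^p)`. -/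
noncomputable def dil (p : ℕ) (F : PowerSeries ℚ) : PowerSeries ℚ :=
  PowerSeries.mk fun m => if p ∣ m then PowerSeries.coeff (m / p) F else 0

/-- `exp(px)`. -/
noncomputable def eps (p : ℕ) : PowerSeries ℚ := rescale (p : ℚ) (exp ℚ)

theorem coeff_dil (F : PowerSeries ℚ) (m : ℕ) :
    coeff m (dil p F) = if p ∣ m then coeff (m / p) F else 0 := coeff_mk _ _

theorem coeff_AHlog_pow (hp : p.Prime) (k : ℕ) : coeff (p ^ k) (AHlog p ℚ) = ((p : ℚ) ^ k)⁻¹ := by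
  have h : ∃ k' : ℕ, p ^ k = p ^ k' := ⟨k, rfl⟩
  have : coeff (p ^ k) (AHlog p ℚ) = ((p : ℚ) ^ h.choose)⁻¹ := by
    rw [AHlog, coeff_mk, dif_pos h]
  rw [this, ← Nat.pow_right_injective hp.two_le h.choose_spec]

theorem coeff_AHlog_not {m : ℕ} (hm : ¬ ∃ k : ℕ, m = p ^ k) : coeff m (AHlog p ℚ) = 0 := by
  rw [AHlog, coeff_mk, dif_neg hm]

theorem constantCoeff_AHlog (hp : p.Prime) : constantCoeff (AHlog p ℚ) = 0 := by
  rw [← coeff_zero_eq_constantCoeff_apply]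
  apply coeff_AHlog_not
  rintro ⟨k, hk⟩
  exact absurd hk.symm (pow_ne_zero k hp.ne_zero)

theorem coeff_hs (hp : p.Prime) (j : ℕ) :
    coeff j (hs p) = if ∃ k : ℕ, j + 1 = p ^ k then 1 else 0 := by
  rw [hs, coeff_derivative]
  split_ifs with hj
  · obtain ⟨k, hk⟩ := hj
    rw [hk, coeff_AHlog_pow hp]
    have : ((p ^ k : ℕ) : ℚ) = (p : ℚ) ^ k := by push_cast; ring
    rw [show ((j : ℚ) + 1) = ((p : ℚ) ^ k) by exact_mod_cast (by exact_mod_cast congrArg (Nat.cast : ℕ → ℚ) hk : ((j + 1 : ℕ) : ℚ) = ((p ^ k : ℕ) : ℚ))]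
    rw [inv_mul_cancel₀ (pow_ne_zero k (Nat.cast_ne_zero.mpr hp.ne_zero))]
  · rw [coeff_AHlog_not hj, zero_mul]

theorem coeff_E (m : ℕ) :
    coeff m (ArtinHasse p ℚ) =
      ∑ n ∈ Finset.range (m + 1), ((n.factorial : ℚ))⁻¹ * coeff m ((AHlog p ℚ) ^ n) := by
  rw [ArtinHasse, compPS, coeff_mk]
  refine Finset.sum_congr rfl fun n _ => ?_
  rw [coeff_exp]
  norm_num

theorem coeff_g_pow (hp : p.Prime) {n i : ℕ} (h : i < n) : coeff i ((AHlog p ℚ) ^ n) = 0 := by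
  have hX : (X : PowerSeries ℚ) ^ n ∣ (AHlog p ℚ) ^ n :=
    pow_dvd_pow_of_dvd (X_dvd_iff.mpr (constantCoeff_AHlog hp)) n
  exact X_pow_dvd_iff.mp hX i h

theorem coeff_E_zero : coeff 0 (ArtinHasse p ℚ) = 1 := by
  rw [coeff_E, Finset.sum_range_one]
  simp

theorem deriv_E (hp : p.Prime) : d⁄dX ℚ (ArtinHasse p ℚ) = hs p * ArtinHasse p ℚ := by
  ext m
  have hterm : ∀ n : ℕ, coeff (m + 1) ((AHlog p ℚ) ^ n) * (m + 1)
      = n * coeff m ((AHlog p ℚ) ^ (n - 1) * hs p) := by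
    intro n
    have hl2 : coeff m ((d⁄dX ℚ) ((AHlog p ℚ) ^ n))
        = n * coeff m ((AHlog p ℚ) ^ (n - 1) * hs p) := by
      rw [Derivation.leibniz_pow, smul_eq_mul, map_nsmul, nsmul_eq_mul, hs]
    rw [← hl2, coeff_derivative]
  rw [coeff_derivative, coeff_E, Finset.sum_mul]
  have lhs_eq : ∑ n ∈ Finset.range (m + 1 + 1),
        ((n.factorial : ℚ))⁻¹ * coeff (m + 1) ((AHlog p ℚ) ^ n) * (m + 1)
      = ∑ i ∈ Finset.range (m + 1),
        ((i.factorial : ℚ))⁻¹ * coeff m ((AHlog p ℚ) ^ i * hs p) := by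
    rw [Finset.sum_range_succ']
    have h0 : ((Nat.factorial 0 : ℚ))⁻¹ * coeff (m + 1) ((AHlog p ℚ) ^ 0) * (m + 1) = 0 := by
      simp
    rw [h0, add_zero]
    refine Finset.sum_congr rfl fun i _ => ?_
    rw [mul_assoc, hterm (i + 1)]
    have hfac : (((i + 1).factorial : ℕ) : ℚ) = ((i : ℚ) + 1) * ((i.factorial : ℕ) : ℚ) := by
      rw [Nat.factorial_succ]; push_cast; ring
    have hi0 : ((i : ℚ) + 1) ≠ 0 := by positivity
    have hf0 : ((i.factorial : ℕ) : ℚ) ≠ 0 := Nat.cast_ne_zero.mpr (Nat.factorial_ne_zero i)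
    rw [hfac, Nat.succ_sub_one]
    push_cast
    field_simp
  rw [lhs_eq, coeff_mul]
  have rhs1 : ∀ x ∈ Finset.HasAntidiagonal.antidiagonal m,
      coeff x.1 (hs p) * coeff x.2 (ArtinHasse p ℚ)
      = ∑ n ∈ Finset.range (m + 1),
          (((n.factorial : ℕ) : ℚ))⁻¹ * (coeff x.1 (hs p) * coeff x.2 ((AHlog p ℚ) ^ n)) := by
    intro x hx
    rw [coeff_E]
    have hsub : Finset.range (x.2 + 1) ⊆ Finset.range (m + 1) := by
      have := Finset.HasAntidiagonal.antidiagonal.snd_le hx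
      exact Finset.range_subset_range.mpr (by omega)
    rw [Finset.sum_subset hsub (fun n _ hn2 => by
      have hlt : x.2 < n := by
        simp only [Finset.mem_range] at hn2
        omega
      rw [coeff_g_pow hp hlt, mul_zero])]
    rw [Finset.mul_sum]
    exact Finset.sum_congr rfl fun n _ => by ring
  rw [Finset.sum_congr rfl rhs1, Finset.sum_comm]
  refine Finset.sum_congr rfl fun n _ => ?_
  rw [← Finset.mul_sum, ← coeff_mul, mul_comm (hs p) _]

theorem dil_mul (hp : p.Prime) (F G : PowerSeries ℚ) :
    dil p (F * G) = dil p F * dil p G := by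
  ext s
  have hR : coeff s (dil p F * dil p G)
      = ∑ k ∈ Finset.range (s + 1), (if p ∣ k then coeff (k / p) F else 0)
          * (if p ∣ s - k then coeff ((s - k) / p) G else 0) := by
    rw [coeff_mul, Finset.Nat.sum_antidiagonal_eq_sum_range_succ_mk]
    exact Finset.sum_congr rfl fun k _ => by rw [coeff_dil, coeff_dil]
  rw [coeff_dil, hR]
  by_cases hps : p ∣ s
  · obtain ⟨s', rfl⟩ := hps
    rw [if_pos (dvd_mul_right p s'), Nat.mul_div_cancel_left s' hp.pos, coeff_mul,
      Finset.Nat.sum_antidiagonal_eq_sum_range_succ_mk]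
    symm
    have hfil : ∀ k ∈ Finset.range (p * s' + 1),
        (if p ∣ k then coeff (k / p) F else 0)
          * (if p ∣ p * s' - k then coeff ((p * s' - k) / p) G else 0) ≠ 0 → p ∣ k := by
      intro k _ hne
      by_contra hdk
      exact hne (by rw [if_neg hdk, zero_mul])
    rw [← Finset.sum_filter_of_ne hfil]
    have himg : (Finset.range (p * s' + 1)).filter (fun k => p ∣ k)
        = (Finset.range (s' + 1)).image (fun k => p * k) := by
      ext a
      simp only [Finset.mem_filter, Finset.mem_range, Finset.mem_image]
      constructor
      · rintro ⟨ha, c, rfl⟩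
        refine ⟨c, ?_, rfl⟩
        have h1 : p * c ≤ p * s' := by omega
        have := Nat.le_of_mul_le_mul_left h1 hp.pos
        omega
      · rintro ⟨c, hc, rfl⟩
        have h1 : p * c ≤ p * s' := Nat.mul_le_mul_left p (by omega)
        exact ⟨by omega, ⟨c, rfl⟩⟩
    rw [himg, Finset.sum_image (fun a _ b _ h => Nat.eq_of_mul_eq_mul_left hp.pos h)]
    refine Finset.sum_congr rfl fun k hk => ?_
    have hk' : k ≤ s' := by
      simp only [Finset.mem_range] at hk
      omega
    have hsub : p * s' - p * k = p * (s' - k) := (Nat.mul_sub_left_distrib p s' k).symm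
    rw [if_pos (dvd_mul_right p k), hsub, if_pos (dvd_mul_right p (s' - k)),
      Nat.mul_div_cancel_left k hp.pos, Nat.mul_div_cancel_left (s' - k) hp.pos]
  · rw [if_neg hps]
    refine (Finset.sum_eq_zero fun k hk => ?_).symm
    simp only [Finset.mem_range] at hk
    by_cases hdk : p ∣ k
    · rw [if_neg (fun hd2 : p ∣ s - k => hps (by
        have he : s - k + k = s := by omega
        rw [← he]
        exact Nat.dvd_add hd2 hdk)), mul_zero]
    · rw [if_neg hdk, zero_mul]

theorem hs_eq (hp : p.Prime) : hs p = 1 + X ^ (p - 1) * dil p (hs p) := by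
  have hp2 := hp.two_le
  ext j
  rw [map_add, coeff_hs hp, coeff_X_pow_mul', coeff_one]
  by_cases hex : ∃ k : ℕ, j + 1 = p ^ k
  · rw [if_pos hex]
    obtain ⟨k, hk⟩ := hex
    rcases Nat.eq_zero_or_pos j with rfl | hj
    · rw [if_pos rfl, if_neg (show ¬ p - 1 ≤ 0 by omega), add_zero]
    · have hk1 : 1 ≤ k := by
        rcases Nat.eq_zero_or_pos k with rfl | h
        · simp at hk; omega
        · exact h
      have hpk : p ^ k = p * p ^ (k - 1) := by
        nth_rw 1 [show k = 1 + (k - 1) by omega]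
        rw [pow_add, pow_one]
      have hple : p - 1 ≤ j := by
        have : p ≤ p ^ k := Nat.le_self_pow (by omega) p
        omega
      have h1 : 1 ≤ p ^ (k - 1) := Nat.one_le_pow _ _ hp.pos
      rw [if_neg (show ¬ j = 0 by omega), if_pos hple, coeff_dil]
      have hjp : j - (p - 1) = p * (p ^ (k - 1) - 1) := by
        rw [Nat.mul_sub_left_distrib, ← hpk, mul_one]
        omega
      rw [hjp, if_pos (dvd_mul_right p _), Nat.mul_div_cancel_left _ hp.pos, coeff_hs hp,
        if_pos ⟨k - 1, by omega⟩, zero_add]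
  · have hj0 : ¬ j = 0 := by
      rintro rfl
      exact hex ⟨0, by simp⟩
    rw [if_neg hex, if_neg hj0, zero_add]
    by_cases hple : p - 1 ≤ j
    · rw [if_pos hple, coeff_dil]
      by_cases hdvd : p ∣ j - (p - 1)
      · obtain ⟨c, hc⟩ := hdvd
        rw [hc, if_pos (dvd_mul_right p c), Nat.mul_div_cancel_left c hp.pos, coeff_hs hp,
          if_neg]
        rintro ⟨k, hk⟩
        apply hex
        refine ⟨k + 1, ?_⟩
        rw [pow_succ', ← hk, Nat.mul_add, mul_one]
        omega
      · rw [if_neg hdvd]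
    · rw [if_neg hple]

theorem deriv_dil_E (hp : p.Prime) :
    d⁄dX ℚ (dil p (ArtinHasse p ℚ))
      = (C (p : ℚ)) * X ^ (p - 1) * dil p (d⁄dX ℚ (ArtinHasse p ℚ)) := by
  have hp2 := hp.two_le
  ext j
  rw [coeff_derivative, coeff_dil, mul_assoc, coeff_C_mul, coeff_X_pow_mul']
  by_cases hd : p ∣ (j + 1)
  · obtain ⟨c, hc⟩ := hd
    have hc1 : 1 ≤ c := by
      rcases Nat.eq_zero_or_pos c with rfl | h
      · omega
      · exact h
    have hpc : p ≤ p * c := Nat.le_mul_of_pos_right p hc1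
    have hple : p - 1 ≤ j := by omega
    have hjp : j - (p - 1) = p * (c - 1) := by
      rw [Nat.mul_sub_left_distrib]
      omega
    rw [if_pos ⟨c, hc⟩, if_pos hple, hjp, coeff_dil, if_pos (dvd_mul_right p _),
      Nat.mul_div_cancel_left _ hp.pos, hc, Nat.mul_div_cancel_left c hp.pos, coeff_derivative]
    have h2 : ((j : ℚ) + 1) = (p : ℚ) * (c : ℚ) := by
      exact_mod_cast congrArg (Nat.cast : ℕ → ℚ) hc
    rw [h2, show c - 1 + 1 = c by omega, Nat.cast_sub hc1]
    push_cast
    ring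
  · rw [if_neg hd, zero_mul]
    symm
    by_cases hple : p - 1 ≤ j
    · rw [if_pos hple, coeff_dil, if_neg (fun hd2 : p ∣ j - (p - 1) => hd (by
        obtain ⟨c, hc⟩ := hd2
        exact ⟨c + 1, by rw [Nat.mul_add, mul_one]; omega⟩)), mul_zero]
    · rw [if_neg hple, mul_zero]

theorem deriv_eps (hp : p.Prime) : d⁄dX ℚ (eps p) = (C (p : ℚ)) * eps p := by
  ext j
  rw [coeff_derivative, eps, coeff_C_mul, coeff_rescale, coeff_rescale, coeff_exp, coeff_exp]
  have hmap : ∀ x : ℚ, algebraMap ℚ ℚ x = x := fun x => rfl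
  rw [hmap, hmap]
  have hfac : (((j + 1).factorial : ℕ) : ℚ) = ((j : ℚ) + 1) * ((j.factorial : ℕ) : ℚ) := by
    rw [Nat.factorial_succ]; push_cast; ring
  have hi0 : ((j : ℚ) + 1) ≠ 0 := by positivity
  have hf0 : ((j.factorial : ℕ) : ℚ) ≠ 0 := Nat.cast_ne_zero.mpr (Nat.factorial_ne_zero j)
  rw [hfac, pow_succ]
  field_simp

theorem ode_unique (c Y Z : PowerSeries ℚ) (hY : d⁄dX ℚ Y = c * Y) (hZ : d⁄dX ℚ Z = c * Z)
    (h0 : coeff 0 Y = coeff 0 Z) : Y = Z := by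
  ext m
  induction m using Nat.strong_induction_on with
  | _ m IH =>
    rcases Nat.eq_zero_or_pos m with rfl | hm
    · exact h0
    · obtain ⟨m', rfl⟩ : ∃ m', m = m' + 1 := ⟨m - 1, by omega⟩
      have hYm := congrArg (coeff m') hY
      have hZm := congrArg (coeff m') hZ
      rw [coeff_derivative] at hYm hZm
      have hsum : coeff m' (c * Y) = coeff m' (c * Z) := by
        rw [coeff_mul, coeff_mul]
        refine Finset.sum_congr rfl fun x hx => ?_
        have := Finset.HasAntidiagonal.antidiagonal.snd_le hx
        rw [IH x.2 (by omega)]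
      have hne : ((m' : ℚ) + 1) ≠ 0 := by positivity
      have := hYm.trans (hsum.trans hZm.symm)
      exact mul_right_cancel₀ hne this

theorem coeff_eps_zero : coeff 0 (eps p) = 1 := by
  rw [eps, coeff_rescale, coeff_exp]
  norm_num

theorem funEq (hp : p.Prime) :
    (ArtinHasse p ℚ) ^ p = eps p * dil p (ArtinHasse p ℚ) := by
  have hcE : constantCoeff (ArtinHasse p ℚ) = 1 := by
    rw [← coeff_zero_eq_constantCoeff_apply]
    exact coeff_E_zero
  apply ode_unique ((C (p : ℚ)) * hs p)
  · rw [Derivation.leibniz_pow, deriv_E hp, smul_eq_mul, nsmul_eq_mul]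
    have hpow : (ArtinHasse p ℚ) ^ (p - 1) * ArtinHasse p ℚ = (ArtinHasse p ℚ) ^ p := by
      rw [← pow_succ, Nat.sub_add_cancel hp.one_le]
    have hC : C ((p : ℕ) : ℚ) = ((p : ℕ) : PowerSeries ℚ) := map_natCast (C (R := ℚ)) p
    rw [hC]
    calc ((p : ℕ) : PowerSeries ℚ) * ((ArtinHasse p ℚ) ^ (p - 1) * (hs p * ArtinHasse p ℚ))
        = ((p : ℕ) : PowerSeries ℚ) * hs p
            * ((ArtinHasse p ℚ) ^ (p - 1) * ArtinHasse p ℚ) := by ring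
      _ = ((p : ℕ) : PowerSeries ℚ) * hs p * (ArtinHasse p ℚ) ^ p := by rw [hpow]
  · rw [Derivation.leibniz, deriv_dil_E hp, deriv_eps hp, smul_eq_mul, smul_eq_mul,
      deriv_E hp, dil_mul hp]
    conv_rhs => rw [hs_eq hp]
    ring
  · have h1 : coeff 0 ((ArtinHasse p ℚ) ^ p) = 1 := by
      rw [coeff_zero_eq_constantCoeff_apply, map_pow, hcE, one_pow]
    have h2 : coeff 0 (eps p * dil p (ArtinHasse p ℚ)) = 1 := by
      rw [coeff_zero_eq_constantCoeff_apply, map_mul,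
        ← coeff_zero_eq_constantCoeff_apply (eps p), coeff_eps_zero,
        ← coeff_zero_eq_constantCoeff_apply, coeff_dil, if_pos (dvd_zero p),
        Nat.zero_div, coeff_E_zero, one_mul]
    rw [h1, h2]

theorem coeff_Epow (hp : p.Prime) {n : ℕ} (hn : 1 ≤ n) :
    coeff n ((ArtinHasse p ℚ) ^ p)
      = coeff n (((trunc n (ArtinHasse p ℚ) : Polynomial ℚ) : PowerSeries ℚ) ^ p)
        + p * coeff n (ArtinHasse p ℚ) := by
  obtain ⟨m, hpm⟩ : ∃ m, p = m + 1 := ⟨p - 1, by have := hp.pos; omega⟩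
  set E := ArtinHasse p ℚ with hE
  set q : PowerSeries ℚ := ((trunc n E : Polynomial ℚ) : PowerSeries ℚ) with hq
  have hdvd : (X : PowerSeries ℚ) ^ n ∣ (E - q) := X_pow_dvd_iff.mpr (fun i hi => by
    rw [map_sub, hq, Polynomial.coeff_coe, coeff_trunc, if_pos hi, sub_self])
  obtain ⟨T, hT⟩ := hdvd
  have hEq : E = q + X ^ n * T := by rw [← hT]; ring
  have hqtop : coeff n q = 0 := by
    rw [hq, Polynomial.coeff_coe, coeff_trunc, if_neg (lt_irrefl n)]
  have hT0 : coeff 0 T = coeff n E := by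
    have hc := congrArg (coeff n) hEq
    rw [map_add, hqtop, zero_add, coeff_X_pow_mul', if_pos (le_refl n), Nat.sub_self] at hc
    exact hc.symm
  have hq0 : constantCoeff q = 1 := by
    rw [← coeff_zero_eq_constantCoeff_apply, hq, Polynomial.coeff_coe, coeff_trunc,
      if_pos (show 0 < n by omega)]
    exact coeff_E_zero
  conv_lhs => rw [hEq]
  rw [add_pow, map_sum, hpm]
  rw [Finset.sum_range_succ, Finset.sum_range_succ]
  have hzero : ∀ k ∈ Finset.range m,
      coeff n (q ^ k * (X ^ n * T) ^ (m + 1 - k) * ((m + 1).choose k : PowerSeries ℚ)) = 0 := by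
    intro k hk
    simp only [Finset.mem_range] at hk
    have h2 : 2 ≤ m + 1 - k := by omega
    have hdd : (X : PowerSeries ℚ) ^ (n + 1) ∣ q ^ k * (X ^ n * T) ^ (m + 1 - k)
        * ((m + 1).choose k : PowerSeries ℚ) := by
      have hdd1 : (X : PowerSeries ℚ) ^ (n + 1) ∣ (X ^ n * T) ^ (m + 1 - k) := by
        rw [mul_pow, ← pow_mul]
        refine dvd_mul_of_dvd_left (pow_dvd_pow X ?_) _
        calc n + 1 ≤ n * 2 := by omega
          _ ≤ n * (m + 1 - k) := Nat.mul_le_mul_left n h2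
      exact dvd_mul_of_dvd_left (dvd_mul_of_dvd_right hdd1 _) _
    exact X_pow_dvd_iff.mp hdd n (by omega)
  rw [Finset.sum_eq_zero hzero, zero_add]
  have hlast : coeff n (q ^ (m + 1) * (X ^ n * T) ^ (m + 1 - (m + 1))
      * ((m + 1).choose (m + 1) : PowerSeries ℚ)) = coeff n (q ^ (m + 1)) := by
    rw [Nat.sub_self, pow_zero, mul_one, Nat.choose_self, Nat.cast_one, mul_one]
  have hmid : coeff n (q ^ m * (X ^ n * T) ^ (m + 1 - m)
      * ((m + 1).choose m : PowerSeries ℚ)) = (m + 1) * coeff n E := by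
    have he : q ^ m * (X ^ n * T) ^ (m + 1 - m) * ((m + 1).choose m : PowerSeries ℚ)
        = X ^ n * (q ^ m * T * ((m + 1).choose m : PowerSeries ℚ)) := by
      rw [show m + 1 - m = 1 by omega, pow_one]
      ring
    rw [he, coeff_X_pow_mul', if_pos (le_refl n), Nat.sub_self,
      coeff_zero_eq_constantCoeff_apply, map_mul, map_mul, map_pow, hq0, one_pow, one_mul,
      ← coeff_zero_eq_constantCoeff_apply, hT0]
    rw [Nat.choose_succ_self_right]
    have : constantCoeff ((m + 1 : ℕ) : PowerSeries ℚ) = ((m + 1 : ℕ) : ℚ) :=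
      map_natCast _ _
    rw [this]
    push_cast
    ring
  rw [hlast, hmid]
  push_cast
  ring

theorem sum_p_mul (hp : p.Prime) (A : Finset ℕ) (f : ℕ → ℚ)
    (h : ∀ i ∈ A, ∃ s ∈ S p hp, f i = p * s) :
    ∃ t ∈ S p hp, ∑ i ∈ A, f i = p * t := by
  classical
  induction A using Finset.induction_on with
  | empty => exact ⟨0, (S p hp).zero_mem, by simp⟩
  | insert a A' ha ih =>
    obtain ⟨t, htS, hts⟩ := ih (fun i hi => h i (Finset.mem_insert_of_mem hi))
    obtain ⟨s, hsS, hss⟩ := h _ (Finset.mem_insert_self _ _)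
    exact ⟨s + t, (S p hp).add_mem hsS htS, by rw [Finset.sum_insert ha, hss, hts]; ring⟩

theorem eps_coeff_mem (hp : p.Prime) {i : ℕ} (hi : 1 ≤ i) :
    ∃ s ∈ S p hp, coeff i (eps p) = p * s := by
  obtain ⟨v, m, hv, hm, hfac⟩ := factorial_val hp (i := i) hi
  have hmz : m ≠ 0 := by
    rintro rfl
    rw [mul_zero] at hfac
    exact Nat.factorial_ne_zero i hfac
  have hm0 : (m : ℚ) ≠ 0 := Nat.cast_ne_zero.mpr hmz
  have hp0 : (p : ℚ) ≠ 0 := Nat.cast_ne_zero.mpr hp.ne_zero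
  refine ⟨((p ^ (i - 1 - v) : ℕ) : ℚ) / ((m : ℕ) : ℚ), ?_, ?_⟩
  · have hmem := div_mem_S hp (a := ((p ^ (i - 1 - v) : ℕ) : ℤ)) (b := (m : ℤ))
      (Int.natCast_ne_zero.mpr hmz)
      (fun hd => hm (Int.natCast_dvd_natCast.mp (by exact_mod_cast hd)))
    convert hmem using 2 <;> push_cast <;> ring
  · rw [eps, coeff_rescale, coeff_exp]
    have hmapq : ∀ x : ℚ, algebraMap ℚ ℚ x = x := fun x => rfl
    rw [hmapq]
    have hfq : ((i.factorial : ℕ) : ℚ) = (p : ℚ) ^ v * (m : ℚ) := by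
      exact_mod_cast congrArg (Nat.cast : ℕ → ℚ) hfac
    have hiexp : (p : ℚ) ^ i = (p : ℚ) * ((p : ℚ) ^ v * (p : ℚ) ^ (i - 1 - v)) := by
      have he : (p : ℚ) ^ i = (p : ℚ) ^ (v + (i - 1 - v) + 1) := by
        congr 1
        omega
      rw [he, pow_add, pow_add, pow_one]
      ring
    rw [hfq, hiexp]
    push_cast
    field_simp


theorem main_mem (hp : p.Prime) : ∀ n, coeff n (ArtinHasse p ℚ) ∈ S p hp := by
  intro n
  induction n using Nat.strong_induction_on with
  | _ n IH =>
    rcases Nat.eq_zero_or_pos n with rfl | hn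
    · rw [coeff_E_zero]
      exact (S p hp).one_mem
    · have hp0 : (p : ℚ) ≠ 0 := Nat.cast_ne_zero.mpr hp.ne_zero
      set E := ArtinHasse p ℚ with hE
      have hdil : ∀ j, j < n → coeff j (dil p E) ∈ S p hp := by
        intro j hj
        rw [coeff_dil]
        split_ifs with h
        · exact IH _ (lt_of_le_of_lt (Nat.div_le_self j p) hj)
        · exact (S p hp).zero_mem
      have hfe := congrArg (coeff n) (funEq hp)
      have hrhs : coeff n (eps p * dil p E)
          = (∑ i ∈ Finset.range n, coeff (i + 1) (eps p) * coeff (n - (i + 1)) (dil p E))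
            + coeff n (dil p E) := by
        rw [coeff_mul, Finset.Nat.sum_antidiagonal_eq_sum_range_succ_mk,
          Finset.sum_range_succ', coeff_eps_zero, Nat.sub_zero, one_mul]
      obtain ⟨t1, ht1S, ht1⟩ := sum_p_mul hp (Finset.range n)
        (fun i => coeff (i + 1) (eps p) * coeff (n - (i + 1)) (dil p E))
        (fun i hi => by
          obtain ⟨s, hsS, hss⟩ := eps_coeff_mem hp (i := i + 1) (by omega)
          refine ⟨s * coeff (n - (i + 1)) (dil p E), (S p hp).mul_mem hsS (hdil _ (by
            simp only [Finset.mem_range] at hi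
            omega)), ?_⟩
          rw [hss]; ring)
      have hlhs := coeff_Epow hp hn
      set qp := trunc n E with hqp
      have hqco : ∀ i, qp.coeff i ∈ S p hp := by
        intro i
        rw [hqp, coeff_trunc]
        split_ifs with h
        · exact IH _ h
        · exact (S p hp).zero_mem
      obtain ⟨t2, ht2S, ht2⟩ := frob_cong hp qp hqco n
      have hpoly : coeff n ((qp : PowerSeries ℚ) ^ p) = (qp ^ p).coeff n := by
        rw [← Polynomial.coe_pow, Polynomial.coeff_coe]
      have hiteq : (if p ∣ n then qp.coeff (n / p) else 0) = coeff n (dil p E) := by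
        rw [coeff_dil]
        split_ifs with h
        · rw [hqp, coeff_trunc, if_pos (Nat.div_lt_self (by omega) hp.one_lt)]
        · rfl
      have e1 := hfe
      rw [hrhs, ht1, hlhs, hpoly, ht2, hiteq] at e1
      have hcomb : (p : ℚ) * coeff n E = p * (t1 - t2) := by
        have : (p : ℚ) * coeff n E = p * t1 - p * t2 := by linarith
        rw [this]; ring
      have heq : coeff n E = t1 - t2 := mul_left_cancel₀ hp0 hcomb
      rw [heq]
      exact (S p hp).sub_mem ht1S ht2S

end PS

end AHProof

/-- The Artin–Hasse exponential has coefficients in `ℤ_(p)`: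
no coefficient has denominator divisible by `p`. -/
theorem artinHasse_coeff_mem_int_localization (p : ℕ) [Fact p.Prime] (n : ℕ) :
    ¬ (p : ℤ) ∣ ((PowerSeries.coeff n (ArtinHasse p ℚ)).den : ℤ) := by
  have hp : p.Prime := Fact.out
  have hmem := AHProof.main_mem hp n
  rw [AHProof.mem_S_iff] at hmem
  intro hd
  exact hmem (Int.natCast_dvd_natCast.mp hd)
end

section
/- Let λ ∈ ℤ_p be rational. Then the power series (1+x)^λ = ∑_{n≥0} binom(λ,n) x^n, reduced modulo p, is algebraic over 𝔽_p(x). -/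
open PowerSeries
open scoped RatFunc

/-- Binomial coefficient `C(c, n) = c(c-1)⋯(c-n+1)/n!` for `c` in a field of characteristic 0. -/
noncomputable def binomC {K : Type*} [Field K] (c : K) (n : ℕ) : K :=
  (∏ i ∈ Finset.range n, (c - i)) / (n.factorial : K)

/-- Reduction mod `p` of a `p`-adic number of norm at most one. -/
noncomputable def padicRed (p : ℕ) [Fact p.Prime] (c : ℚ_[p]) : ZMod p :=
  if h : ‖c‖ ≤ 1 then PadicInt.toZMod (⟨c, h⟩ : ℤ_[p]) else 0

/-- The mod-`p` reduction of the binomial series `(1+x)^λ = ∑ C(λ,n) xⁿ`, for `λ ∈ ℤ_p`. -/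
noncomputable def onePlusXPowBar (p : ℕ) [Fact p.Prime] (lam : ℤ_[p]) : PowerSeries (ZMod p) :=
  PowerSeries.mk fun n => padicRed p (binomC (lam : ℚ_[p]) n)

lemma smeval_descPochhammer_eq_prod {R : Type*} [CommRing R] (c : R) (n : ℕ) :
    (descPochhammer ℤ n).smeval c = ∏ i ∈ Finset.range n, (c - i) := by
  induction n with
  | zero => simp [descPochhammer_zero, Polynomial.smeval_one]
  | succ n ih =>
      rw [descPochhammer_succ_right, Finset.prod_range_succ, ← ih, Polynomial.smeval_mul,
        Polynomial.smeval_sub, Polynomial.smeval_X, Polynomial.smeval_natCast]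
      simp

section binomC

variable {K : Type*} [Field K] [CharZero K]

lemma binomC_eq_choose (c : K) (n : ℕ) : binomC c n = Ring.choose c n := by
  have h := Ring.descPochhammer_eq_factorial_smul_choose (R := K) c n
  rw [smeval_descPochhammer_eq_prod] at h
  rw [binomC, h, nsmul_eq_mul,
    mul_div_cancel_left₀ _ (Nat.cast_ne_zero.mpr n.factorial_ne_zero : (n.factorial : K) ≠ 0)]

lemma binomC_add (c d : K) (n : ℕ) :
    binomC (c + d) n = ∑ ij ∈ Finset.HasAntidiagonal.antidiagonal n, binomC c ij.1 * binomC d ij.2 := by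
  simp only [binomC_eq_choose]
  exact Ring.add_choose_eq n (Commute.all c d)

lemma binomC_natCast (k n : ℕ) : binomC ((k : K)) n = (k.choose n : K) := by
  rw [binomC_eq_choose, Ring.choose_natCast]

/-- The binomial power series over `K`. -/
noncomputable def binomSeries (c : K) : PowerSeries K := PowerSeries.mk (binomC c)

lemma binomSeries_mul (c d : K) : binomSeries c * binomSeries d = binomSeries (c + d) := by
  ext n
  rw [PowerSeries.coeff_mul]
  simp only [binomSeries, PowerSeries.coeff_mk, binomC_add]

lemma binomSeries_pow (c : K) (b : ℕ) : (binomSeries c) ^ b = binomSeries (b • c) := by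
  induction b with
  | zero =>
      ext n
      simp only [pow_zero, zero_smul, binomSeries, PowerSeries.coeff_mk]
      rw [PowerSeries.coeff_one]
      rcases Nat.eq_zero_or_pos n with h | h
      · subst h; simp [binomC]
      · rw [if_neg h.ne']
        rw [binomC, Finset.prod_eq_zero (Finset.mem_range.mpr h) (by simp), zero_div]
  | succ b ih => rw [pow_succ, ih, binomSeries_mul, succ_nsmul', add_comm]

lemma coeff_one_add_X_pow (k n : ℕ) :
    (PowerSeries.coeff n) ((1 + PowerSeries.X) ^ k) = (k.choose n : K) := by
  have h : ((1 : K⟦X⟧) + PowerSeries.X) = ((1 + Polynomial.X : Polynomial K) : K⟦X⟧) := by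
    simp
  rw [h, ← Polynomial.coe_pow, Polynomial.coeff_coe, Polynomial.coeff_one_add_X_pow]

lemma binomSeries_natCast (k : ℕ) :
    binomSeries ((k : K)) = (1 + PowerSeries.X) ^ k := by
  ext n
  rw [binomSeries, PowerSeries.coeff_mk, binomC_natCast, coeff_one_add_X_pow]

end binomC

section norm

variable (p : ℕ) [Fact p.Prime]

lemma binomC_coe (lam : ℤ_[p]) (n : ℕ) :
    ((Ring.choose lam n : ℤ_[p]) : ℚ_[p]) = binomC (lam : ℚ_[p]) n := by
  have h := Ring.descPochhammer_eq_factorial_smul_choose (R := ℤ_[p]) lam n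
  rw [smeval_descPochhammer_eq_prod] at h
  have hco : ∀ x : ℤ_[p], PadicInt.Coe.ringHom (p := p) x = (x : ℚ_[p]) := fun _ => rfl
  have h2 := congrArg (PadicInt.Coe.ringHom (p := p)) h
  rw [map_prod, map_nsmul] at h2
  simp only [map_sub, map_natCast, hco] at h2
  push_cast at h2
  rw [binomC, h2, nsmul_eq_mul,
    mul_div_cancel_left₀ _ (Nat.cast_ne_zero.mpr n.factorial_ne_zero : (n.factorial : ℚ_[p]) ≠ 0)]

lemma norm_binomC_le (lam : ℤ_[p]) (n : ℕ) : ‖binomC (lam : ℚ_[p]) n‖ ≤ 1 := by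
  rw [← binomC_coe]
  exact (Ring.choose lam n).2

end norm

lemma powerSeries_map_injective {R S : Type*} [CommRing R] [CommRing S] (f : R →+* S)
    (hf : Function.Injective f) : Function.Injective (PowerSeries.map f) := by
  intro φ ψ h
  ext n
  exact hf (by simpa using congrArg (PowerSeries.coeff n) h)

/-- If `λ ∈ ℤ_p` is rational, then `(1+x)^λ mod p` is algebraic over `𝔽_p(x)`. -/
theorem onePlusXPowBar_isAlgebraic_of_rational (p : ℕ) [Fact p.Prime] (lam : ℤ_[p])
    (hrat : ∃ r : ℚ, (lam : ℚ_[p]) = (r : ℚ_[p])) :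
    IsAlgebraic (RatFunc (ZMod p))
      ((onePlusXPowBar p lam : PowerSeries (ZMod p)) : LaurentSeries (ZMod p)) := by
  obtain ⟨r, hr⟩ := hrat
  set b : ℕ := r.den with hb
  set k : ℕ := r.num.toNat with hk
  set m : ℕ := (-r.num).toNat with hm
  have hbpos : 0 < b := r.pos
  -- The key identity over ℚ_[p]
  have hkey : (binomSeries ((lam : ℚ_[p]))) ^ b * (1 + PowerSeries.X) ^ m
      = (1 + PowerSeries.X) ^ k := by
    rw [← binomSeries_natCast, ← binomSeries_natCast, binomSeries_pow, binomSeries_mul]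
    congr 1
    have h1 : (b : ℚ_[p]) * (lam : ℚ_[p]) = (r.num : ℚ_[p]) := by
      rw [hr]
      have h0 : ((r.den : ℚ)) * r = (r.num : ℚ) := by
        rw [mul_comm]; exact r.mul_den_eq_num
      have := congrArg (fun q : ℚ => (q : ℚ_[p])) h0
      push_cast at this ⊢
      exact this
    have h2 : (r.num : ℚ_[p]) + m = k := by
      have h3 : (k : ℤ) = r.num + (m : ℤ) := by
        rcases le_or_gt 0 r.num with h | h
        · simp [hk, hm, Int.toNat_of_nonneg h, Int.toNat_of_nonpos (neg_nonpos.mpr h)]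
        · simp [hk, hm, Int.toNat_of_nonpos h.le, Int.toNat_of_nonneg (neg_nonneg.mpr h.le)]
      have h4 := congrArg (fun z : ℤ => (z : ℚ_[p])) h3
      push_cast at h4
      linear_combination -h4
    rw [nsmul_eq_mul, h1, h2]
  -- descend to ℤ_[p]
  set B : PowerSeries ℤ_[p] :=
    PowerSeries.mk fun n => (⟨_, norm_binomC_le p lam n⟩ : ℤ_[p]) with hB
  have hmapB : PowerSeries.map (PadicInt.Coe.ringHom (p := p)) B
      = binomSeries ((lam : ℚ_[p])) := by
    ext n
    simp only [hB, PowerSeries.coeff_map, PowerSeries.coeff_mk, binomSeries]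
    exact (congrArg _ (PowerSeries.coeff_mk n _)).trans rfl
  have hZkey : B ^ b * (1 + PowerSeries.X) ^ m = (1 + PowerSeries.X) ^ k := by
    apply powerSeries_map_injective (PadicInt.Coe.ringHom (p := p)) (fun _ _ hab => Subtype.ext hab)
    simp only [map_mul, map_pow, map_add, map_one, PowerSeries.map_X, hmapB, hkey]
  -- reduce mod p
  have hFbar : PowerSeries.map (PadicInt.toZMod (p := p)) B = onePlusXPowBar p lam := by
    ext n
    simp only [hB, PowerSeries.coeff_map, PowerSeries.coeff_mk, onePlusXPowBar, padicRed]
    rw [dif_pos (norm_binomC_le p lam n)]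
    exact congrArg _ (PowerSeries.coeff_mk n _)
  have hFkey : (onePlusXPowBar p lam) ^ b * (1 + PowerSeries.X) ^ m
      = (1 + PowerSeries.X) ^ k := by
    rw [← hFbar]
    have := congrArg (PowerSeries.map (PadicInt.toZMod (p := p))) hZkey
    simpa only [map_mul, map_pow, map_add, map_one, PowerSeries.map_X] using this
  -- build the algebraic witness
  set u : RatFunc (ZMod p) :=
    algebraMap (Polynomial (ZMod p)) (RatFunc (ZMod p)) ((1 + Polynomial.X) ^ m) with hu
  set v : RatFunc (ZMod p) :=
    algebraMap (Polynomial (ZMod p)) (RatFunc (ZMod p)) ((1 + Polynomial.X) ^ k) with hv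
  refine ⟨Polynomial.C u * Polynomial.X ^ b - Polynomial.C v, ?_, ?_⟩
  · intro h
    have hu0 : u ≠ 0 := by
      rw [hu]
      apply RatFunc.algebraMap_ne_zero
      refine pow_ne_zero _ ?_
      intro (h0 : (1 + Polynomial.X : Polynomial (ZMod p)) = 0)
      have := congrArg (fun q => Polynomial.coeff q 1) h0
      simp only [Polynomial.coeff_add, Polynomial.coeff_one, Polynomial.coeff_X_one,
        Polynomial.coeff_zero, if_neg one_ne_zero, zero_add] at this
      exact one_ne_zero this
    have hc := congrArg (fun q => Polynomial.coeff q b) h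
    simp only [Polynomial.coeff_sub, Polynomial.coeff_C_mul, Polynomial.coeff_X_pow,
      if_pos rfl, mul_one, Polynomial.coeff_C, if_neg hbpos.ne', sub_zero,
      Polynomial.coeff_zero] at hc
    simp only [if_true, mul_one] at hc
    exact hu0 hc
  · have hcoe : ∀ (j : ℕ), (algebraMap (RatFunc (ZMod p)) (LaurentSeries (ZMod p)))
        (algebraMap (Polynomial (ZMod p)) (RatFunc (ZMod p)) ((1 + Polynomial.X) ^ j))
        = (HahnSeries.ofPowerSeries ℤ (ZMod p)) ((1 + PowerSeries.X) ^ j) := by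
      intro j
      have h2 : (((1 + Polynomial.X) ^ j : Polynomial (ZMod p)) : PowerSeries (ZMod p))
          = (1 + PowerSeries.X) ^ j := by
        rw [Polynomial.coe_pow, Polynomial.coe_add, Polynomial.coe_one, Polynomial.coe_X]
      rw [show (algebraMap (RatFunc (ZMod p)) (LaurentSeries (ZMod p)))
          (algebraMap (Polynomial (ZMod p)) (RatFunc (ZMod p)) ((1 + Polynomial.X) ^ j))
          = ((((1 + Polynomial.X) ^ j : Polynomial (ZMod p)) : RatFunc (ZMod p)) :
            LaurentSeries (ZMod p)) from rfl, ← RatFunc.coe_coe, h2]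
    simp only [Polynomial.aeval_def, Polynomial.eval₂_sub, Polynomial.eval₂_mul,
      Polynomial.eval₂_C, Polynomial.eval₂_X_pow]
    rw [hu, hv, hcoe, hcoe]
    have hL := congrArg (HahnSeries.ofPowerSeries ℤ (ZMod p)) hFkey
    rw [map_mul, map_pow] at hL
    rw [sub_eq_zero, mul_comm]
    exact hL
end

section
/- With τ(f) = ∑_{n≥0} f^{σ^n} for f ∈ x·ℤ_q⟦x⟧, for all f, g ∈ x·ℤ_q⟦x⟧ one has τ(f)·τ(g) = τ(f·τ(g)) + τ(g·τ(f)) − τ(f·g). -/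
open PowerSeries

variable (p : ℕ) [Fact p.Prime]

/-- `ℤ_q = W(𝔽_q)`, the `p`-typical Witt vectors of the field with `q = p^f` elements. -/
abbrev Zq (f : ℕ) : Type _ := WittVector p (GaloisField p f)

/-- The endomorphism `σ` of `ℤ_q⟦x⟧` sending `x` to `x^p` and acting as the Witt-vector
Frobenius on coefficients: `σ(∑ aₙ xⁿ) = ∑ F(aₙ) x^{pn}`. -/
noncomputable def sigmaPS (f : ℕ) (F : PowerSeries (Zq p f)) : PowerSeries (Zq p f) :=
  PowerSeries.mk fun m =>
    letI := Classical.propDecidable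
    if h : ∃ n : ℕ, m = p * n then WittVector.frobenius (PowerSeries.coeff h.choose F) else 0

/-- `τ(F) = ∑_{n≥0} F^{σⁿ}` (an `x`-adically convergent sum when `F(0) = 0`). -/
noncomputable def tauPS (f : ℕ) (F : PowerSeries (Zq p f)) : PowerSeries (Zq p f) :=
  PowerSeries.mk fun m => ∑ n ∈ Finset.range (m + 1),
    PowerSeries.coeff m ((sigmaPS p f)^[n] F)

lemma coeff_sigmaPS (f : ℕ) (F : PowerSeries (Zq p f)) (m : ℕ) :
    PowerSeries.coeff m (sigmaPS p f F)
      = if p ∣ m then WittVector.frobenius (PowerSeries.coeff (m / p) F) else 0 := by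
  classical
  have hp : 0 < p := (Fact.out : p.Prime).pos
  rw [sigmaPS, PowerSeries.coeff_mk]
  by_cases h : p ∣ m
  · obtain ⟨n, rfl⟩ := h
    have hex : ∃ k : ℕ, p * n = p * k := ⟨n, rfl⟩
    rw [dif_pos hex, if_pos ⟨n, rfl⟩]
    have : hex.choose = n := by
      have := hex.choose_spec
      exact (Nat.eq_of_mul_eq_mul_left hp this.symm)
    rw [this, Nat.mul_div_cancel_left n hp]
  · rw [dif_neg, if_neg h]
    rintro ⟨n, rfl⟩
    exact h ⟨n, rfl⟩

lemma coeff_sigmaPS_mul (f : ℕ) (F : PowerSeries (Zq p f)) (n : ℕ) :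
    PowerSeries.coeff (p * n) (sigmaPS p f F)
      = WittVector.frobenius (PowerSeries.coeff n F) := by
  have hp : 0 < p := (Fact.out : p.Prime).pos
  rw [coeff_sigmaPS, if_pos ⟨n, rfl⟩, Nat.mul_div_cancel_left n hp]


lemma sigmaPS_add (f : ℕ) (F G : PowerSeries (Zq p f)) :
    sigmaPS p f (F + G) = sigmaPS p f F + sigmaPS p f G := by
  refine PowerSeries.ext fun m => ?_
  simp only [coeff_sigmaPS, map_add]
  split <;> simp

lemma sigmaPS_one (f : ℕ) : sigmaPS p f 1 = 1 := by
  have hp : 0 < p := (Fact.out : p.Prime).pos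
  refine PowerSeries.ext fun m => ?_
  rw [coeff_sigmaPS]
  by_cases h : p ∣ m
  · rw [if_pos h]
    obtain ⟨k, rfl⟩ := h
    rcases Nat.eq_zero_or_pos k with rfl | hk
    · simp
    · rw [Nat.mul_div_cancel_left k hp, PowerSeries.coeff_one, if_neg (by omega), map_zero,
        PowerSeries.coeff_one, if_neg (by positivity)]
  · rw [if_neg h, PowerSeries.coeff_one, if_neg]
    rintro rfl
    exact h (dvd_zero p)

lemma sigmaPS_mul (f : ℕ) (F G : PowerSeries (Zq p f)) :
    sigmaPS p f (F * G) = sigmaPS p f F * sigmaPS p f G := by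
  have hp : 0 < p := (Fact.out : p.Prime).pos
  have hp2 : 2 ≤ p := (Fact.out : p.Prime).two_le
  refine PowerSeries.ext fun m => ?_
  rw [PowerSeries.coeff_mul (φ := sigmaPS p f F)]
  simp only [Finset.Nat.sum_antidiagonal_eq_sum_range_succ_mk]
  rw [coeff_sigmaPS]
  by_cases h : p ∣ m
  · obtain ⟨n, rfl⟩ := h
    rw [if_pos ⟨n, rfl⟩, Nat.mul_div_cancel_left n hp, PowerSeries.coeff_mul]
    simp only [Finset.Nat.sum_antidiagonal_eq_sum_range_succ_mk]
    rw [map_sum]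
    rw [show (Finset.range (p * n + 1)) = (Finset.range (p*n+1)).filter (fun k => p ∣ k) ∪
        (Finset.range (p*n+1)).filter (fun k => ¬ p ∣ k) from (Finset.filter_union_filter_not_eq _ _).symm]
    rw [Finset.sum_union (Finset.disjoint_filter_filter_not _ _ _)]
    have h2 : ∑ k ∈ (Finset.range (p*n+1)).filter (fun k => ¬ p ∣ k),
        (PowerSeries.coeff k (sigmaPS p f F)) * PowerSeries.coeff (p*n - k) (sigmaPS p f G) = 0 := by
      apply Finset.sum_eq_zero
      intro k hk
      rw [Finset.mem_filter] at hk
      rw [coeff_sigmaPS, if_neg hk.2, zero_mul]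
    rw [h2, add_zero]
    have h3 : (Finset.range (p*n+1)).filter (fun k => p ∣ k)
        = (Finset.range (n+1)).image (fun k => p * k) := by
      ext k
      simp only [Finset.mem_filter, Finset.mem_range, Finset.mem_image]
      constructor
      · rintro ⟨hk, j, rfl⟩
        exact ⟨j, by nlinarith, rfl⟩
      · rintro ⟨j, hj, rfl⟩
        exact ⟨by nlinarith, j, rfl⟩
    rw [h3, Finset.sum_image (by intro a _ b _ h; exact Nat.eq_of_mul_eq_mul_left hp h)]
    apply Finset.sum_congr rfl
    intro k hk
    rw [Finset.mem_range] at hk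
    rw [map_mul, coeff_sigmaPS_mul, show p * n - p * k = p * (n - k) from by
      rw [Nat.mul_sub], coeff_sigmaPS_mul]
  · rw [if_neg h]
    symm
    apply Finset.sum_eq_zero
    intro k hk
    rw [Finset.mem_range] at hk
    rw [coeff_sigmaPS]
    by_cases hk1 : p ∣ k
    · have hd : ¬ p ∣ (m - k) := by
        intro hd
        refine h ?_
        have hm : m = k + (m - k) := by omega
        rw [hm]
        exact Nat.dvd_add hk1 hd
      rw [coeff_sigmaPS p f G (m - k), if_neg hd, mul_zero]
    · rw [if_neg hk1, zero_mul]

lemma sigmaPS_neg (f : ℕ) (F : PowerSeries (Zq p f)) :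
    sigmaPS p f (-F) = -(sigmaPS p f F) := by
  refine PowerSeries.ext fun m => ?_
  simp only [coeff_sigmaPS, map_neg]
  split <;> simp

lemma sigmaPS_sub (f : ℕ) (F G : PowerSeries (Zq p f)) :
    sigmaPS p f (F - G) = sigmaPS p f F - sigmaPS p f G := by
  rw [sub_eq_add_neg, sigmaPS_add, sigmaPS_neg, ← sub_eq_add_neg]

lemma coeff_iterate_sigmaPS_eq_zero (f : ℕ) (H : PowerSeries (Zq p f))
    (hH : PowerSeries.constantCoeff H = 0) :
    ∀ n m : ℕ, m < p ^ n → PowerSeries.coeff m ((sigmaPS p f)^[n] H) = 0 := by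
  have hp : 0 < p := (Fact.out : p.Prime).pos
  intro n
  induction n with
  | zero =>
    intro m hm
    have : m = 0 := by simpa using hm
    subst this
    simpa [PowerSeries.coeff_zero_eq_constantCoeff] using hH
  | succ n ih =>
    intro m hm
    rw [Function.iterate_succ_apply', coeff_sigmaPS]
    split
    · rename_i h
      obtain ⟨k, rfl⟩ := h
      rw [Nat.mul_div_cancel_left k hp, ih k (by
        rw [pow_succ'] at hm
        exact lt_of_mul_lt_mul_left hm (Nat.zero_le p)), map_zero]
    · rfl

lemma coeff_tauPS (f : ℕ) (H : PowerSeries (Zq p f)) (m : ℕ) :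
    PowerSeries.coeff m (tauPS p f H)
      = ∑ n ∈ Finset.range (m + 1), PowerSeries.coeff m ((sigmaPS p f)^[n] H) := by
  rw [tauPS, PowerSeries.coeff_mk]

lemma constantCoeff_tauPS (f : ℕ) (H : PowerSeries (Zq p f))
    (hH : PowerSeries.constantCoeff H = 0) :
    PowerSeries.constantCoeff (tauPS p f H) = 0 := by
  rw [← PowerSeries.coeff_zero_eq_constantCoeff, coeff_tauPS]
  simpa [PowerSeries.coeff_zero_eq_constantCoeff] using hH

lemma tauPS_funEq (f : ℕ) (H : PowerSeries (Zq p f))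
    (hH : PowerSeries.constantCoeff H = 0) :
    tauPS p f H = H + sigmaPS p f (tauPS p f H) := by
  have hp : 0 < p := (Fact.out : p.Prime).pos
  have hp2 : 2 ≤ p := (Fact.out : p.Prime).two_le
  refine PowerSeries.ext fun m => ?_
  rw [map_add, coeff_tauPS, Finset.sum_range_succ']
  simp only [Function.iterate_zero_apply, Function.iterate_succ_apply', coeff_sigmaPS]
  rw [add_comm]
  congr 1
  by_cases h : p ∣ m
  · simp only [if_pos h]
    rw [← map_sum]
    congr 1
    rcases Nat.eq_zero_or_pos m with rfl | hm
    · rw [Finset.sum_range_zero, Nat.zero_div, PowerSeries.coeff_zero_eq_constantCoeff_apply,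
        constantCoeff_tauPS p f H hH]
    · rw [coeff_tauPS]
      symm
      apply Finset.sum_subset
      · apply Finset.range_subset_range.2
        have := Nat.div_lt_self hm hp2
        omega
      · intro n _ hn
        rw [Finset.mem_range, not_lt] at hn
        apply coeff_iterate_sigmaPS_eq_zero p f H hH
        calc m / p < n := by omega
        _ < p ^ n := Nat.lt_pow_self hp2
  · simp [if_neg h]

lemma eq_zero_of_sigmaPS_fixed (f : ℕ) (D : PowerSeries (Zq p f))
    (h0 : PowerSeries.constantCoeff D = 0) (hD : D = sigmaPS p f D) : D = 0 := by
  have hp : 0 < p := (Fact.out : p.Prime).pos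
  have hp2 : 2 ≤ p := (Fact.out : p.Prime).two_le
  have key : ∀ m, PowerSeries.coeff m D = 0 := by
    intro m
    induction m using Nat.strong_induction_on with
    | _ m ih =>
      rw [hD, coeff_sigmaPS]
      split
      · rename_i h
        rcases Nat.eq_zero_or_pos m with rfl | hm
        · rw [Nat.zero_div, PowerSeries.coeff_zero_eq_constantCoeff_apply, h0, map_zero]
        · rw [ih (m / p) (Nat.div_lt_self hm hp2), map_zero]
      · rfl
  exact PowerSeries.ext fun m => by rw [key m, map_zero]

/-- `τ(F)·τ(G) = τ(F·τ(G)) + τ(G·τ(F)) − τ(F·G)` for `F, G ∈ x·ℤ_q⟦x⟧`. -/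
theorem tauPS_mul (f : ℕ) (F G : PowerSeries (Zq p f))
    (hF : PowerSeries.constantCoeff F = 0) (hG : PowerSeries.constantCoeff G = 0) :
    tauPS p f F * tauPS p f G
      = tauPS p f (F * tauPS p f G) + tauPS p f (G * tauPS p f F) - tauPS p f (F * G) := by
  set A := tauPS p f F with hAdef
  set B := tauPS p f G with hBdef
  have hcA : PowerSeries.constantCoeff A = 0 := constantCoeff_tauPS p f F hF
  have hcB : PowerSeries.constantCoeff B = 0 := constantCoeff_tauPS p f G hG
  have hcFB : PowerSeries.constantCoeff (F * B) = 0 := by rw [map_mul, hF, zero_mul]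
  have hcGA : PowerSeries.constantCoeff (G * A) = 0 := by rw [map_mul, hG, zero_mul]
  have hcFG : PowerSeries.constantCoeff (F * G) = 0 := by rw [map_mul, hF, zero_mul]
  have hA : A = F + sigmaPS p f A := tauPS_funEq p f F hF
  have hB : B = G + sigmaPS p f B := tauPS_funEq p f G hG
  have h1 : tauPS p f (F * B) = F * B + sigmaPS p f (tauPS p f (F * B)) :=
    tauPS_funEq p f _ hcFB
  have h2 : tauPS p f (G * A) = G * A + sigmaPS p f (tauPS p f (G * A)) :=
    tauPS_funEq p f _ hcGA
  have h3 : tauPS p f (F * G) = F * G + sigmaPS p f (tauPS p f (F * G)) :=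
    tauPS_funEq p f _ hcFG
  set D := tauPS p f (F * B) + tauPS p f (G * A) - tauPS p f (F * G) - A * B with hDdef
  have hcD : PowerSeries.constantCoeff D = 0 := by
    rw [hDdef, map_sub, map_sub, map_add, map_mul, hcA, constantCoeff_tauPS p f _ hcFB,
      constantCoeff_tauPS p f _ hcGA, constantCoeff_tauPS p f _ hcFG, zero_mul]
    ring
  have e1 : sigmaPS p f (tauPS p f (F * B)) = tauPS p f (F * B) - F * B := by
    conv_rhs => rw [h1]
    ring
  have e2 : sigmaPS p f (tauPS p f (G * A)) = tauPS p f (G * A) - G * A := by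
    conv_rhs => rw [h2]
    ring
  have e3 : sigmaPS p f (tauPS p f (F * G)) = tauPS p f (F * G) - F * G := by
    conv_rhs => rw [h3]
    ring
  have eA' : sigmaPS p f A = A - F := by
    conv_rhs => rw [hA]
    ring
  have eB' : sigmaPS p f B = B - G := by
    conv_rhs => rw [hB]
    ring
  have hfix : D = sigmaPS p f D := by
    rw [hDdef, sigmaPS_sub, sigmaPS_sub, sigmaPS_add, sigmaPS_mul, e1, e2, e3, eA', eB']
    ring
  have hzero : D = 0 := eq_zero_of_sigmaPS_fixed p f D hcD hfix
  rw [hDdef] at hzero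
  linear_combination -hzero
end

section
/- Let f ∈ 𝔽_q[x] be a polynomial whose degree is ≥ 1 and coprime to p. Then the Artin–Schreier equation y^p − y = f(x) has no solution y ∈ 𝔽_q(x). -/
/-- Artin–Schreier: if `f ∈ 𝔽_q[x]` has degree `≥ 1` coprime to `p`, then `y^p − y = f`
has no solution `y` in the rational function field `𝔽_q(x)`. -/
theorem no_artinSchreier_solution (p : ℕ) [Fact p.Prime] (n : ℕ) (hn : n ≠ 0)
    (f : Polynomial (GaloisField p n)) (hdeg : 1 ≤ f.natDegree)
    (hcop : Nat.Coprime f.natDegree p) :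
    ¬ ∃ y : RatFunc (GaloisField p n),
        y ^ p - y = algebraMap (Polynomial (GaloisField p n)) (RatFunc (GaloisField p n)) f := by
  rintro ⟨y, hy⟩
  set K := GaloisField p n with hK
  have hp : p.Prime := Fact.out
  -- y is integral over 𝔽_q[x]
  have hint : IsIntegral (Polynomial K) y := by
    refine ⟨Polynomial.X ^ p - (Polynomial.X + Polynomial.C f), ?_, ?_⟩
    · apply (Polynomial.monic_X_pow p).sub_of_left
      have h2 : (1 : ℕ) < p := hp.one_lt
      calc (Polynomial.X + Polynomial.C f).degree
          ≤ max (Polynomial.X : Polynomial (Polynomial K)).degree (Polynomial.C f).degree :=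
            Polynomial.degree_add_le _ _
        _ ≤ 1 := by
            simp [Polynomial.degree_X]
            exact le_trans Polynomial.degree_C_le (by norm_num)
        _ < (p : WithBot ℕ) := by exact_mod_cast h2
        _ = (Polynomial.X ^ p : Polynomial (Polynomial K)).degree := by
            rw [Polynomial.degree_X_pow]
    · simp only [Polynomial.eval₂_sub, Polynomial.eval₂_add, Polynomial.eval₂_pow,
        Polynomial.eval₂_X, Polynomial.eval₂_C]
      have := hy
      rw [sub_eq_iff_eq_add] at this
      rw [this]; ring
  obtain ⟨z, hz⟩ := IsIntegrallyClosed.isIntegral_iff.mp hint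
  have hzf : z ^ p - z = f := by
    apply IsFractionRing.injective (Polynomial K) (RatFunc K)
    rw [map_sub, map_pow, hz, hy]
  rcases Nat.eq_zero_or_pos z.natDegree with h0 | h1
  · -- z constant ⇒ f constant, contradicting deg f ≥ 1
    have : f.natDegree = 0 := by
      rw [← hzf]
      have h1 : (z ^ p).natDegree = 0 := by
        rw [Polynomial.natDegree_pow, h0, Nat.mul_zero]
      have := Polynomial.natDegree_sub_le (z ^ p) z
      omega
    omega
  · have hlt : z.natDegree < (z ^ p).natDegree := by
      rw [Polynomial.natDegree_pow]
      have := hp.two_le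
      nlinarith
    have : f.natDegree = p * z.natDegree := by
      rw [← hzf, Polynomial.natDegree_sub_eq_left_of_natDegree_lt hlt,
        Polynomial.natDegree_pow]
    have hdvd : p ∣ f.natDegree := ⟨z.natDegree, this⟩
    have : p ∣ 1 := hcop ▸ Nat.dvd_gcd hdvd dvd_rfl
    have := Nat.le_of_dvd one_pos this
    have := hp.two_le
    omega
end

section
/- In 𝔽_p⟦x⟧, the logarithmic derivative of the reduced Artin–Hasse exponential satisfies x·Ē_p′(x) = ȳ·Ē_p(x), where ȳ = ∑_{n≥0} x^{p^n} ∈ 𝔽_p⟦x⟧ (the reduction of the unique solution to y(x^p) − y(x) = −x in x𝔽_p⟦x⟧). -/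
open PowerSeries

/-- Reduction mod `p` of a rational number whose denominator is prime to `p`. -/
noncomputable def ratRed (p : ℕ) (r : ℚ) : ZMod p := (r.num : ZMod p) * (r.den : ZMod p)⁻¹

/-- The mod-`p` Artin–Hasse exponential. -/
noncomputable def EbarP (p : ℕ) : PowerSeries (ZMod p) :=
  PowerSeries.mk fun m => ratRed p (PowerSeries.coeff m (ArtinHasse p ℚ))


/-- `ȳ = ∑_{n≥0} x^{pⁿ} ∈ 𝔽_p⟦x⟧`, the reduction of the solution of `y(x^p) − y(x) = −x`. -/
noncomputable def ybar (p : ℕ) : PowerSeries (ZMod p) :=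
  PowerSeries.mk fun m =>
    letI := Classical.propDecidable
    if ∃ k : ℕ, m = p ^ k then 1 else 0

set_option linter.unusedSectionVars false
set_option maxHeartbeats 1000000

namespace AHaux


variable (p : ℕ) [Fact p.Prime]

/-- `p`-integrality of a rational. -/
def D (r : ℚ) : Prop := ¬ p ∣ r.den

variable {p}

lemma hp2 : 2 ≤ p := (Fact.out : p.Prime).two_le

lemma D_of_den_dvd {r : ℚ} {b : ℤ} (hpb : ¬ (p : ℤ) ∣ b) (h : (r.den : ℤ) ∣ b) : D p r := by
  intro hd
  exact hpb (dvd_trans (Int.natCast_dvd_natCast.mpr hd) h)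

lemma D_of_eq_div {r : ℚ} (a : ℤ) {b : ℤ} (hpb : ¬ (p : ℤ) ∣ b) (h : r = (a : ℚ) / b) :
    D p r := by
  refine D_of_den_dvd hpb ?_
  have : r = Rat.divInt a b := by rw [Rat.divInt_eq_div, h]
  rw [this]
  exact Rat.den_dvd a b

lemma num_eq_mul_den (r : ℚ) : (r.num : ℚ) = r * r.den := by
  have h := Rat.num_div_den r
  rw [div_eq_iff (by exact_mod_cast r.den_nz : ((r.den : ℚ)) ≠ 0)] at h
  exact h

lemma denNe {r : ℚ} (h : D p r) : ((r.den : ZMod p)) ≠ 0 :=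
  fun h0 => h ((ZMod.natCast_eq_zero_iff _ _).mp h0)

lemma D_add {r s : ℚ} (hr : D p r) (hs : D p s) : D p (r + s) := by
  intro hd
  rcases ((Fact.out : p.Prime).dvd_mul.mp (hd.trans (Rat.add_den_dvd r s))) with h | h
  exacts [hr h, hs h]

lemma D_mul {r s : ℚ} (hr : D p r) (hs : D p s) : D p (r * s) := by
  intro hd
  rcases ((Fact.out : p.Prime).dvd_mul.mp (hd.trans (Rat.mul_den_dvd r s))) with h | h
  exacts [hr h, hs h]

lemma D_neg {r : ℚ} (hr : D p r) : D p (-r) := by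
  simpa [D] using hr

lemma D_intCast (n : ℤ) : D p (n : ℚ) := by simp [D, (Fact.out : p.Prime).one_lt.ne']

lemma D_natCast (n : ℕ) : D p (n : ℚ) := by simpa using D_intCast (p := p) (n : ℤ)

lemma D_zero : D p 0 := by simpa using D_natCast (p := p) 0
lemma D_one : D p 1 := by simpa using D_natCast (p := p) 1

lemma D_sub {r s : ℚ} (hr : D p r) (hs : D p s) : D p (r - s) := by
  simpa [sub_eq_add_neg] using D_add hr (D_neg hs)

lemma D_sum {α : Type*} {s : Finset α} {f : α → ℚ} (h : ∀ i ∈ s, D p (f i)) :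
    D p (∑ i ∈ s, f i) := by
  classical
  induction s using Finset.induction_on with
  | empty => simpa using D_zero
  | insert _ _ hx ih =>
    rw [Finset.sum_insert hx]
    exact D_add (h _ (Finset.mem_insert_self _ _))
      (ih fun i hi => h i (Finset.mem_insert_of_mem hi))

lemma ratRed_eq {r : ℚ} (a : ℤ) {b : ℤ} (hb : ((b : ZMod p)) ≠ 0) (h : r = (a : ℚ) / b) :
    ratRed p r = (a : ZMod p) * (b : ZMod p)⁻¹ := by
  have hb0 : b ≠ 0 := by rintro rfl; simp at hb
  have hbq : (b : ℚ) ≠ 0 := Int.cast_ne_zero.mpr hb0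
  have hpb : ¬ (p : ℤ) ∣ b := fun hd => hb ((ZMod.intCast_zmod_eq_zero_iff_dvd b p).mpr hd)
  have hden : ((r.den : ZMod p)) ≠ 0 := denNe (D_of_eq_div a hpb h)
  have hdq : ((r.den : ℚ)) ≠ 0 := Nat.cast_ne_zero.mpr r.den_nz
  have key : r.num * b = a * (r.den : ℤ) := by
    have hr' := num_eq_mul_den r
    have : (r.num : ℚ) * b = (a : ℚ) * (r.den : ℚ) := by
      rw [hr', h]; field_simp
    exact_mod_cast this
  have key2 : ((r.num : ZMod p)) * b = (a : ZMod p) * (r.den : ZMod p) := by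
    have := congrArg (fun z : ℤ => (z : ZMod p)) key
    push_cast at this
    exact this
  rw [ratRed]
  field_simp
  linear_combination key2

lemma ratRed_intCast (n : ℤ) : ratRed p (n : ℚ) = (n : ZMod p) := by
  rw [ratRed_eq n (b := 1) (by simp) (by simp)]
  simp

lemma ratRed_natCast (n : ℕ) : ratRed p (n : ℚ) = (n : ZMod p) := by
  simpa using ratRed_intCast (p := p) (n : ℤ)

lemma ratRed_zero : ratRed p 0 = 0 := by simpa using ratRed_natCast (p := p) 0
lemma ratRed_one : ratRed p 1 = 1 := by simpa using ratRed_natCast (p := p) 1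

lemma ratRed_add {r s : ℚ} (hr : D p r) (hs : D p s) :
    ratRed p (r + s) = ratRed p r + ratRed p s := by
  have hrd := denNe hr; have hsd := denNe hs
  have hrq : ((r.den : ℚ)) ≠ 0 := Nat.cast_ne_zero.mpr r.den_nz
  have hsq : ((s.den : ℚ)) ≠ 0 := Nat.cast_ne_zero.mpr s.den_nz
  rw [ratRed_eq (r.num * s.den + s.num * r.den) (b := (r.den : ℤ) * s.den)
      (by push_cast; exact mul_ne_zero hrd hsd)
      (by
        have hr' := num_eq_mul_den r; have hs' := num_eq_mul_den s
        push_cast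
        rw [eq_div_iff (mul_ne_zero hrq hsq)]
        rw [hr', hs']; ring)]
  rw [ratRed, ratRed]
  push_cast
  field_simp

lemma ratRed_mul {r s : ℚ} (hr : D p r) (hs : D p s) :
    ratRed p (r * s) = ratRed p r * ratRed p s := by
  have hrd := denNe hr; have hsd := denNe hs
  have hrq : ((r.den : ℚ)) ≠ 0 := Nat.cast_ne_zero.mpr r.den_nz
  have hsq : ((s.den : ℚ)) ≠ 0 := Nat.cast_ne_zero.mpr s.den_nz
  rw [ratRed_eq (r.num * s.num) (b := (r.den : ℤ) * s.den)
      (by push_cast; exact mul_ne_zero hrd hsd)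
      (by
        have hr' := num_eq_mul_den r; have hs' := num_eq_mul_den s
        push_cast
        rw [eq_div_iff (mul_ne_zero hrq hsq)]
        rw [hr', hs']; ring)]
  rw [ratRed, ratRed]
  push_cast
  field_simp

lemma ratRed_neg (r : ℚ) : ratRed p (-r) = - ratRed p r := by
  simp [ratRed, Rat.neg_num, Rat.neg_den]

lemma ratRed_sub {r s : ℚ} (hr : D p r) (hs : D p s) :
    ratRed p (r - s) = ratRed p r - ratRed p s := by
  rw [sub_eq_add_neg, sub_eq_add_neg, ratRed_add hr (D_neg hs), ratRed_neg]

lemma ratRed_sum {α : Type*} {s : Finset α} {f : α → ℚ} (h : ∀ i ∈ s, D p (f i)) :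
    ratRed p (∑ i ∈ s, f i) = ∑ i ∈ s, ratRed p (f i) := by
  classical
  induction s using Finset.induction_on with
  | empty => simpa using ratRed_zero
  | insert _ _ hx ih =>
    rename_i x s'
    rw [Finset.sum_insert hx, Finset.sum_insert hx,
      ratRed_add (h _ (Finset.mem_insert_self _ _))
        (D_sum fun i hi => h i (Finset.mem_insert_of_mem hi)),
      ih fun i hi => h i (Finset.mem_insert_of_mem hi)]

/-- Dividing by a unit mod `p`. -/
lemma D_div_nat {r : ℚ} (hr : D p r) {n : ℕ} (hn : ¬ p ∣ n) (hn0 : n ≠ 0) : D p (r / n) := by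
  have hrq : ((r.den : ℚ)) ≠ 0 := Nat.cast_ne_zero.mpr r.den_nz
  have hr' := num_eq_mul_den r
  refine D_of_eq_div r.num (b := ((r.den * n : ℕ) : ℤ)) ?_ ?_
  · rw [Int.natCast_dvd_natCast]
    intro hd
    rcases ((Fact.out : p.Prime).dvd_mul.mp hd) with h | h
    exacts [hr h, hn h]
  · have hnq : ((n : ℚ)) ≠ 0 := Nat.cast_ne_zero.mpr hn0
    push_cast
    rw [div_eq_div_iff hnq (mul_ne_zero hrq hnq), hr']
    ring

lemma ratRed_eq_zero_imp {b : ℚ} (hb : D p b) (h0 : ratRed p b = 0) : (p : ℤ) ∣ b.num := by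
  have := denNe hb
  rw [ratRed] at h0
  rcases mul_eq_zero.mp h0 with h | h
  · exact (ZMod.intCast_zmod_eq_zero_iff_dvd _ _).mp h
  · exact absurd (inv_eq_zero.mp h) this

/-- If `p * a` is `p`-integral with zero reduction, then `a` is `p`-integral. -/
lemma D_of_p_mul {a b : ℚ} (hb : D p b) (h0 : ratRed p b = 0) (h : (p : ℚ) * a = b) :
    D p a := by
  obtain ⟨c, hc⟩ := ratRed_eq_zero_imp hb h0
  have hpq : ((p : ℚ)) ≠ 0 := Nat.cast_ne_zero.mpr (Fact.out : p.Prime).ne_zero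
  have hbq : ((b.den : ℚ)) ≠ 0 := Nat.cast_ne_zero.mpr b.den_nz
  refine D_of_eq_div c (b := (b.den : ℤ)) (by exact_mod_cast hb) ?_
  have hb' := num_eq_mul_den b
  have hcq : ((p : ℚ)) * c = b * b.den := by rw [← hb', hc]; push_cast; ring
  have : a = b / p := by rw [← h]; field_simp
  rw [this]
  push_cast
  rw [div_eq_div_iff hpq hbq]
  linear_combination -hcq




open Finset

variable (p) in
/-- the subring of `p`-integral rationals -/
def Dsub : Subring ℚ where
  carrier := {r | D p r}
  one_mem' := D_one
  mul_mem' := fun ha hb => D_mul ha hb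
  add_mem' := fun ha hb => D_add ha hb
  zero_mem' := D_zero
  neg_mem' := fun ha => D_neg ha

lemma mem_Dsub {r : ℚ} : r ∈ Dsub p ↔ D p r := Iff.rfl

variable (p) in
/-- reduction mod `p` as a ring hom on `p`-integral rationals -/
noncomputable def redHom : Dsub p →+* ZMod p where
  toFun r := ratRed p r.1
  map_one' := ratRed_one
  map_mul' a b := ratRed_mul a.2 b.2
  map_zero' := ratRed_zero
  map_add' a b := ratRed_add a.2 b.2

lemma redHom_apply (r : Dsub p) : redHom p r = ratRed p r.1 := rfl

section general
variable {R : Type*} [CommRing R]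

lemma coeff_derivativeFun' (f : R⟦X⟧) (n : ℕ) :
    coeff n f.derivativeFun = coeff (n + 1) f * (n + 1) :=
  PowerSeries.coeff_derivative f n

lemma coeff_X_mul_derivativeFun (f : R⟦X⟧) (m : ℕ) :
    coeff m (X * f.derivativeFun) = m * coeff m f := by
  cases m with
  | zero => simp
  | succ n =>
    rw [coeff_succ_X_mul, coeff_derivativeFun']
    push_cast
    ring

lemma derivativeFun_pow (f : R⟦X⟧) (n : ℕ) :
    (f ^ n).derivativeFun = (n : R⟦X⟧) * f ^ (n - 1) * f.derivativeFun := by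
  induction n with
  | zero => simpa using PowerSeries.derivativeFun_one
  | succ k ih =>
    rw [pow_succ, PowerSeries.derivativeFun_mul, ih]
    cases k with
    | zero => simp [smul_eq_mul]
    | succ l =>
      simp only [Nat.succ_sub_one, smul_eq_mul]
      push_cast
      ring

lemma coeff_natCast_mul (n : ℕ) (h : R⟦X⟧) (m : ℕ) :
    coeff m ((n : R⟦X⟧) * h) = (n : R) * coeff m h := by
  rw [← map_natCast C n, PowerSeries.coeff_C_mul]

lemma coeff_compPS {g : R⟦X⟧} (hg : constantCoeff g = 0) (f : R⟦X⟧) {m N : ℕ}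
    (h : m < N) :
    coeff m (compPS f g) = ∑ n ∈ range N, coeff n f * coeff m (g ^ n) := by
  rw [compPS, coeff_mk]
  apply Finset.sum_subset (Finset.range_subset_range.mpr h)
  intro n _ hn
  have hmn : m < n := by simpa using hn
  have hx : (X : R⟦X⟧) ^ n ∣ g ^ n := pow_dvd_pow_of_dvd (X_dvd_iff.mpr hg) n
  rw [PowerSeries.X_pow_dvd_iff.mp hx m hmn, mul_zero]

lemma compPS_chain (f g : R⟦X⟧) (hg : constantCoeff g = 0) :
    X * (compPS f g).derivativeFun
      = compPS f.derivativeFun g * (X * g.derivativeFun) := by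
  ext m
  set W := X * g.derivativeFun with hW
  calc coeff m (X * (compPS f g).derivativeFun)
      = (m : R) * coeff m (compPS f g) := coeff_X_mul_derivativeFun _ m
    _ = ∑ n ∈ range (m + 2), coeff n f * ((m : R) * coeff m (g ^ n)) := by
        rw [coeff_compPS hg f (show m < m + 2 by omega), Finset.mul_sum]
        refine Finset.sum_congr rfl fun n _ => by ring
    _ = ∑ n ∈ range (m + 2), coeff n f * ((n : R) * coeff m (g ^ (n - 1) * W)) := by
        refine Finset.sum_congr rfl fun n _ => ?_
        congr 1
        rw [← coeff_X_mul_derivativeFun (g ^ n) m, derivativeFun_pow,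
          show X * ((n : R⟦X⟧) * g ^ (n - 1) * g.derivativeFun)
            = (n : R⟦X⟧) * (g ^ (n - 1) * W) by rw [hW]; ring,
          coeff_natCast_mul]
    _ = ∑ i ∈ range (m + 1), coeff (i + 1) f * (((i : R) + 1) * coeff m (g ^ i * W)) := by
        rw [Finset.sum_range_succ' (fun n => coeff n f * ((n : R) * coeff m (g ^ (n - 1) * W)))
          (m + 1)]
        simp
    _ = ∑ n ∈ range (m + 1), coeff n f.derivativeFun * coeff m (g ^ n * W) := by
        refine Finset.sum_congr rfl fun n _ => ?_
        rw [coeff_derivativeFun']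
        push_cast
        ring
    _ = ∑ n ∈ range (m + 1), ∑ ij ∈ antidiagonal m,
          coeff n f.derivativeFun * (coeff ij.1 (g ^ n) * coeff ij.2 W) := by
        simp only [PowerSeries.coeff_mul, Finset.mul_sum]
    _ = ∑ ij ∈ antidiagonal m, (∑ n ∈ range (m + 1),
          coeff n f.derivativeFun * coeff ij.1 (g ^ n)) * coeff ij.2 W := by
        rw [Finset.sum_comm]
        refine Finset.sum_congr rfl fun ij _ => ?_
        rw [Finset.sum_mul]
        refine Finset.sum_congr rfl fun n _ => ?_
        ring
    _ = ∑ ij ∈ antidiagonal m, coeff ij.1 (compPS f.derivativeFun g) * coeff ij.2 W := by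
        refine Finset.sum_congr rfl fun ij hij => ?_
        rw [coeff_compPS hg f.derivativeFun
          (Nat.lt_succ_of_le (Finset.HasAntidiagonal.antidiagonal.fst_le hij))]
    _ = coeff m (compPS f.derivativeFun g * W) := (PowerSeries.coeff_mul _ _ _).symm

end general

section rat

variable (p : ℕ) [Fact p.Prime]

/-- indicator series of prime powers, over ℚ -/
noncomputable def Yq : PowerSeries ℚ :=
  PowerSeries.mk fun m =>
    letI := Classical.propDecidable
    if ∃ k : ℕ, m = p ^ k then 1 else 0

lemma Yq_def : Yq p = PowerSeries.mk fun m =>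
    letI := Classical.propDecidable
    if ∃ k : ℕ, m = p ^ k then 1 else 0 := rfl

lemma not_zero_pow (k : ℕ) : (0 : ℕ) ≠ p ^ k :=
  fun h => (pow_pos (Fact.out : p.Prime).pos k).ne h

lemma constantCoeff_AHlog : constantCoeff (AHlog p ℚ) = 0 := by
  rw [← PowerSeries.coeff_zero_eq_constantCoeff_apply, AHlog, coeff_mk]
  rw [dif_neg]
  rintro ⟨k, hk⟩
  exact not_zero_pow p k hk

lemma constantCoeff_Yq : constantCoeff (Yq p) = 0 := by
  rw [← PowerSeries.coeff_zero_eq_constantCoeff_apply, Yq, coeff_mk]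
  rw [if_neg]
  rintro ⟨k, hk⟩
  exact not_zero_pow p k hk

lemma X_mul_deriv_AHlog : X * (AHlog p ℚ).derivativeFun = Yq p := by
  ext m
  rw [coeff_X_mul_derivativeFun, AHlog, Yq, coeff_mk, coeff_mk]
  by_cases hex : ∃ k : ℕ, m = p ^ k
  · rw [dif_pos hex, if_pos hex]
    have hc := hex.choose_spec
    have hp0 : ((p : ℚ)) ≠ 0 := Nat.cast_ne_zero.mpr (Fact.out : p.Prime).ne_zero
    generalize hq : hex.choose = k at hc ⊢
    subst hc
    push_cast
    field_simp
  · rw [dif_neg hex, if_neg hex, mul_zero]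

lemma exp_derivativeFun : (exp ℚ).derivativeFun = exp ℚ := by
  ext n
  rw [coeff_derivativeFun', PowerSeries.coeff_exp, PowerSeries.coeff_exp]
  have h1 : ((Nat.factorial n : ℚ)) ≠ 0 := Nat.cast_ne_zero.mpr n.factorial_ne_zero
  have h2 : ((Nat.factorial (n + 1) : ℚ)) ≠ 0 :=
    Nat.cast_ne_zero.mpr (Nat.factorial_ne_zero (n + 1))
  simp only [Algebra.algebraMap_self, RingHom.id_apply]
  rw [Nat.factorial_succ]
  push_cast
  field_simp

lemma X_mul_deriv_E :
    X * (ArtinHasse p ℚ).derivativeFun = Yq p * ArtinHasse p ℚ := by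
  rw [ArtinHasse, compPS_chain _ _ (constantCoeff_AHlog p), exp_derivativeFun,
    X_mul_deriv_AHlog]
  rw [← ArtinHasse]
  ring

lemma coeff_zero_E : coeff 0 (ArtinHasse p ℚ) = 1 := by
  rw [ArtinHasse, compPS, coeff_mk]
  simp [PowerSeries.coeff_exp]

end rat


section part3
variable {R : Type*} [CommRing R]
/-- substitution `x ↦ x^p` -/
noncomputable def psub (p : ℕ) (f : R⟦X⟧) : R⟦X⟧ :=
  PowerSeries.mk fun m => if p ∣ m then coeff (m / p) f else 0

lemma coeff_psub (p : ℕ) (f : R⟦X⟧) (m : ℕ) :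
    coeff m (psub p f) = if p ∣ m then coeff (m / p) f else 0 := by
  rw [psub, coeff_mk]

lemma coeff_psub_mul (p : ℕ) (hp : p ≠ 0) (m : ℕ) (f g : R⟦X⟧) :
    coeff (p * m) (psub p f * g) =
      ∑ k ∈ range (m + 1), coeff k f * coeff (p * m - p * k) g := by
  rw [PowerSeries.coeff_mul, Finset.Nat.sum_antidiagonal_eq_sum_range_succ_mk]
  dsimp only
  calc ∑ k ∈ range (p * m).succ, coeff k (psub p f) * coeff (p * m - k) g
      = ∑ u ∈ (range (m + 1)).image (fun k => p * k),
          coeff u (psub p f) * coeff (p * m - u) g := by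
        refine (Finset.sum_subset ?_ ?_).symm
        · intro u hu
          simp only [Finset.mem_image, Finset.mem_range] at hu ⊢
          obtain ⟨k, hk, rfl⟩ := hu
          exact Nat.lt_succ_of_le (Nat.mul_le_mul_left p (Nat.lt_succ_iff.mp hk))
        · intro u hu hnu
          have hnd : ¬ p ∣ u := by
            rintro ⟨k, rfl⟩
            refine hnu ?_
            simp only [Finset.mem_range] at hu
            simp only [Finset.mem_image, Finset.mem_range]
            exact ⟨k, Nat.lt_succ_of_le (Nat.le_of_mul_le_mul_left (by omega)
              (Nat.pos_of_ne_zero hp)), rfl⟩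
          rw [coeff_psub, if_neg hnd, zero_mul]
    _ = ∑ k ∈ range (m + 1), coeff (p * k) (psub p f) * coeff (p * m - p * k) g := by
        refine Finset.sum_image fun x _ y _ h =>
          Nat.eq_of_mul_eq_mul_left (Nat.pos_of_ne_zero hp) h
    _ = ∑ k ∈ range (m + 1), coeff k f * coeff (p * m - p * k) g := by
        refine Finset.sum_congr rfl fun k _ => ?_
        rw [coeff_psub, if_pos ⟨k, rfl⟩, Nat.mul_div_cancel_left k (Nat.pos_of_ne_zero hp)]

lemma psub_mul (p : ℕ) (hp : p ≠ 0) (f g : R⟦X⟧) :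
    psub p (f * g) = psub p f * psub p g := by
  ext m
  rw [coeff_psub]
  by_cases hm : p ∣ m
  · obtain ⟨m', rfl⟩ := hm
    rw [if_pos ⟨m', rfl⟩, coeff_psub_mul p hp m' f (psub p g),
      Nat.mul_div_cancel_left m' (Nat.pos_of_ne_zero hp)]
    rw [PowerSeries.coeff_mul, Finset.Nat.sum_antidiagonal_eq_sum_range_succ_mk]
    refine Finset.sum_congr rfl fun k hk => ?_
    have hk' : k ≤ m' := Nat.lt_succ_iff.mp (Finset.mem_range.mp hk)
    have h1 : p * m' - p * k = p * (m' - k) := (Nat.mul_sub_left_distrib p m' k).symm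
    rw [h1, coeff_psub, if_pos ⟨m' - k, rfl⟩,
      Nat.mul_div_cancel_left _ (Nat.pos_of_ne_zero hp)]
  · rw [if_neg hm, PowerSeries.coeff_mul, eq_comm]
    refine Finset.sum_eq_zero fun ij hij => ?_
    have hijm : ij.1 + ij.2 = m := Finset.HasAntidiagonal.mem_antidiagonal.mp hij
    by_cases h1 : p ∣ ij.1
    · have h2 : ¬ p ∣ ij.2 := fun h2 => hm (hijm ▸ Nat.dvd_add h1 h2)
      rw [coeff_psub p g, if_neg h2, mul_zero]
    · rw [coeff_psub p f, if_neg h1, zero_mul]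

lemma constantCoeff_psub (p : ℕ) (f : R⟦X⟧) :
    constantCoeff (psub p f) = constantCoeff f := by
  rw [← PowerSeries.coeff_zero_eq_constantCoeff_apply, coeff_psub, if_pos (dvd_zero p),
    Nat.zero_div, PowerSeries.coeff_zero_eq_constantCoeff_apply]

section prime
variable (p : ℕ) [Fact p.Prime]

lemma X_mul_deriv_psub (f : ℚ⟦X⟧) :
    X * (psub p f).derivativeFun = (p : ℚ⟦X⟧) * psub p (X * f.derivativeFun) := by
  have hp : p ≠ 0 := (Fact.out : p.Prime).ne_zero
  ext m
  rw [coeff_X_mul_derivativeFun, coeff_psub, coeff_natCast_mul, coeff_psub]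
  by_cases hm : p ∣ m
  · obtain ⟨m', rfl⟩ := hm
    rw [if_pos ⟨m', rfl⟩, if_pos ⟨m', rfl⟩,
      Nat.mul_div_cancel_left m' (Nat.pos_of_ne_zero hp), coeff_X_mul_derivativeFun]
    push_cast
    ring
  · rw [if_neg hm, if_neg hm]
    simp

lemma X_mul_deriv_rescale :
    X * (rescale (p : ℚ) (exp ℚ)).derivativeFun
      = (p : ℚ⟦X⟧) * (X * rescale (p : ℚ) (exp ℚ)) := by
  have hd : (rescale (p : ℚ) (exp ℚ)).derivativeFun
      = C (p : ℚ) * rescale (p : ℚ) ((exp ℚ).derivativeFun) := by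
    ext n
    rw [coeff_derivativeFun', PowerSeries.coeff_rescale, PowerSeries.coeff_C_mul,
      PowerSeries.coeff_rescale, coeff_derivativeFun']
    ring
  rw [hd, exp_derivativeFun, ← map_natCast C p]
  ring

lemma psub_Yq : X + psub p (Yq p) = Yq p := by
  have hp2 : 2 ≤ p := (Fact.out : p.Prime).two_le
  ext m
  rw [map_add, coeff_psub, Yq_def]
  simp only [coeff_mk, PowerSeries.coeff_X]
  by_cases hm1 : m = 1
  · subst hm1
    rw [if_pos rfl, if_neg (by rw [Nat.dvd_one]; omega : ¬ p ∣ 1), if_pos ⟨0, by norm_num⟩]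
    norm_num
  · rw [if_neg hm1]
    by_cases hex : ∃ k : ℕ, m = p ^ k
    · obtain ⟨k, rfl⟩ := hex
      have hk : k ≠ 0 := by rintro rfl; exact hm1 (pow_zero p)
      have hdvd : p ∣ p ^ k := dvd_pow_self p hk
      rw [if_pos hdvd, if_pos ⟨k - 1, by
          rw [← Nat.pow_div (by omega) (by omega), pow_one]⟩,
        if_pos ⟨k, rfl⟩, zero_add]
    · rw [if_neg hex, zero_add]
      by_cases hdvd : p ∣ m
      · rw [if_pos hdvd, if_neg]
        rintro ⟨k, hk⟩
        exact hex ⟨k + 1, by rw [pow_succ, ← hk, Nat.div_mul_cancel hdvd]⟩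
      · rw [if_neg hdvd]

lemma ode_unique {c F G : ℚ⟦X⟧} (hc : constantCoeff c = 0)
    (hF : X * F.derivativeFun = c * F) (hG : X * G.derivativeFun = c * G)
    (h0 : coeff 0 F = coeff 0 G) : F = G := by
  ext m
  induction m using Nat.strong_induction_on with
  | _ m ih =>
    match m with
    | 0 => exact h0
    | n + 1 =>
      have hFc := congrArg (coeff (n + 1)) hF
      have hGc := congrArg (coeff (n + 1)) hG
      rw [coeff_X_mul_derivativeFun, PowerSeries.coeff_mul] at hFc hGc
      have hsum : ∑ ij ∈ antidiagonal (n + 1), coeff ij.1 c * coeff ij.2 F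
          = ∑ ij ∈ antidiagonal (n + 1), coeff ij.1 c * coeff ij.2 G := by
        refine Finset.sum_congr rfl fun ij hij => ?_
        have hijm : ij.1 + ij.2 = n + 1 := Finset.HasAntidiagonal.mem_antidiagonal.mp hij
        by_cases h1 : ij.1 = 0
        · rw [h1, PowerSeries.coeff_zero_eq_constantCoeff_apply, hc, zero_mul, zero_mul]
        · rw [ih ij.2 (by omega)]
      have : ((n : ℚ) + 1) * coeff (n + 1) F = ((n : ℚ) + 1) * coeff (n + 1) G := by
        push_cast at hFc hGc
        rw [hFc, hGc, hsum]
      exact mul_left_cancel₀ (by positivity) this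

lemma frobenius_E :
    (ArtinHasse p ℚ) ^ p
      = psub p (ArtinHasse p ℚ) * rescale (p : ℚ) (exp ℚ) := by
  have hp : p ≠ 0 := (Fact.out : p.Prime).ne_zero
  set E := ArtinHasse p ℚ with hE
  apply ode_unique (c := (p : ℚ⟦X⟧) * Yq p)
  · rw [map_mul, constantCoeff_Yq, mul_zero]
  · rw [derivativeFun_pow]
    calc X * ((p : ℚ⟦X⟧) * E ^ (p - 1) * E.derivativeFun)
        = (p : ℚ⟦X⟧) * E ^ (p - 1) * (X * E.derivativeFun) := by ring
      _ = (p : ℚ⟦X⟧) * E ^ (p - 1) * (Yq p * E) := by rw [X_mul_deriv_E]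
      _ = (p : ℚ⟦X⟧) * Yq p * (E ^ (p - 1) * E) := by ring
      _ = (p : ℚ⟦X⟧) * Yq p * E ^ p := by
          rw [← pow_succ, Nat.sub_add_cancel (Nat.pos_of_ne_zero hp)]
  · set Rp := rescale (p : ℚ) (exp ℚ) with hRp
    rw [PowerSeries.derivativeFun_mul]
    calc X * (psub p E • Rp.derivativeFun + Rp • (psub p E).derivativeFun)
        = psub p E * (X * Rp.derivativeFun) + Rp * (X * (psub p E).derivativeFun) := by
          simp only [smul_eq_mul]; ring
      _ = psub p E * ((p : ℚ⟦X⟧) * (X * Rp)) + Rp * ((p : ℚ⟦X⟧) * psub p (X * E.derivativeFun)) := by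
          rw [X_mul_deriv_rescale, X_mul_deriv_psub]
      _ = psub p E * ((p : ℚ⟦X⟧) * (X * Rp)) + Rp * ((p : ℚ⟦X⟧) * (psub p (Yq p) * psub p E)) := by
          rw [X_mul_deriv_E, psub_mul p hp]
      _ = (p : ℚ⟦X⟧) * (X + psub p (Yq p)) * (psub p E * Rp) := by ring
      _ = (p : ℚ⟦X⟧) * Yq p * (psub p E * Rp) := by rw [psub_Yq]
  · have hE0 : constantCoeff E = 1 := by
      rw [← PowerSeries.coeff_zero_eq_constantCoeff_apply]; exact coeff_zero_E p
    have hR0 : constantCoeff (rescale (p : ℚ) (exp ℚ)) = 1 := by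
      rw [← PowerSeries.coeff_zero_eq_constantCoeff_apply, PowerSeries.coeff_rescale]
      simp [PowerSeries.coeff_zero_eq_constantCoeff_apply, PowerSeries.constantCoeff_exp]
    simp [PowerSeries.coeff_zero_eq_constantCoeff_apply, map_pow, map_mul, constantCoeff_psub,
      hE0, hR0]

end prime

end part3


section part4
variable (p : ℕ) [Fact p.Prime]

lemma padicValNat_factorial_le (n : ℕ) : padicValNat p (Nat.factorial (n + 1)) ≤ n := by
  have hp2 : 2 ≤ p := (Fact.out : p.Prime).two_le
  have hnil : p.digits (n + 1) ≠ [] := Nat.digits_ne_nil_iff_ne_zero.mpr (Nat.succ_ne_zero n)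
  have hlast := Nat.getLast_digit_ne_zero p (Nat.succ_ne_zero n)
  have hs : 1 ≤ (p.digits (n + 1)).sum := by
    have hmem := List.getLast_mem hnil
    have h2 := List.single_le_sum (fun x (_ : x ∈ p.digits (n + 1)) => Nat.zero_le x) _ hmem
    have h1 : (p.digits (n + 1)).getLast hnil ≠ 0 := hlast
    omega
  have hleg := sub_one_mul_padicValNat_factorial (p := p) (n + 1)
  have hv : padicValNat p (Nat.factorial (n + 1)) ≤ (p - 1) * padicValNat p (Nat.factorial (n + 1)) :=
    Nat.le_mul_of_pos_left _ (by omega)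
  omega

lemma D_pexp (j : ℕ) : D p ((p : ℚ) ^ j / (Nat.factorial (j + 1) : ℚ)) := by
  have hp0 : p ≠ 0 := (Fact.out : p.Prime).ne_zero
  set v := padicValNat p (Nat.factorial (j + 1)) with hv
  have hvj : v ≤ j := padicValNat_factorial_le p j
  have hfac : Nat.factorial (j + 1) = p ^ v * (Nat.factorial (j + 1) / p ^ v) := by
    rw [hv, ← Nat.factorization_def _ (Fact.out : p.Prime)]
    exact (Nat.ordProj_mul_ordCompl_eq_self _ p).symm
  set w := Nat.factorial (j + 1) / p ^ v with hw
  have hpw : ¬ p ∣ w := by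
    rw [hw, hv, ← Nat.factorization_def _ (Fact.out : p.Prime)]
    exact Nat.not_dvd_ordCompl (Fact.out : p.Prime) (Nat.factorial_ne_zero (j + 1))
  have hw0 : w ≠ 0 := by
    intro h
    rw [h, mul_zero] at hfac
    exact Nat.factorial_ne_zero (j + 1) hfac
  refine D_of_eq_div ((p : ℤ) ^ (j - v)) (b := (w : ℤ)) ?_ ?_
  · rw [Int.natCast_dvd_natCast]; exact hpw
  · have hq1 : ((Nat.factorial (j + 1) : ℚ)) ≠ 0 := Nat.cast_ne_zero.mpr (Nat.factorial_ne_zero _)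
    have hq2 : ((w : ℚ)) ≠ 0 := Nat.cast_ne_zero.mpr hw0
    push_cast
    rw [div_eq_div_iff hq1 hq2]
    rw [show ((Nat.factorial (j + 1) : ℚ)) = (p : ℚ) ^ v * w by exact_mod_cast congrArg Nat.cast hfac]
    have hpp : (p : ℚ) ^ (j - v) * (p : ℚ) ^ v = (p : ℚ) ^ j := by
      rw [← pow_add, Nat.sub_add_cancel hvj]
    linear_combination (-(w : ℚ)) * hpp

lemma coeff_rangeSum {S : Type*} [CommRing S] (c : ℕ → S) (m i : ℕ) :
    (∑ j ∈ Finset.range m, Polynomial.C (c j) * Polynomial.X ^ j).coeff i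
      = if i < m then c i else 0 := by
  rw [Polynomial.finset_sum_coeff]
  simp only [Polynomial.coeff_C_mul, Polynomial.coeff_X_pow, mul_ite, mul_one, mul_zero]
  rw [Finset.sum_ite_eq (Finset.range m) i c]
  simp [Finset.mem_range]

lemma coeff_Rp (j : ℕ) :
    coeff j (rescale (p : ℚ) (exp ℚ)) = (p : ℚ) ^ j / (Nat.factorial j : ℚ) := by
  rw [PowerSeries.coeff_rescale, PowerSeries.coeff_exp]
  simp only [Algebra.algebraMap_self, RingHom.id_apply]
  rw [one_div, div_eq_mul_inv]

lemma D_coeff_E : ∀ m, D p (coeff m (ArtinHasse p ℚ)) := by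
  intro m
  induction m using Nat.strong_induction_on with
  | _ m ih =>
  rcases Nat.eq_zero_or_pos m with rfl | hm
  · rw [coeff_zero_E]; exact D_one
  rcases em (p ∣ m) with hdvd | hndvd
  · -- Frobenius case: `p ∣ m`
    obtain ⟨m', rfl⟩ := hdvd
    have hp2 : 2 ≤ p := (Fact.out : p.Prime).two_le
    have hppos : 0 < p := by omega
    have hm'pos : 0 < m' := by
      rcases Nat.eq_zero_or_pos m' with rfl | h
      · simp at hm
      · exact h
    have hm'lt : m' < p * m' := (Nat.lt_mul_iff_one_lt_left hm'pos).mpr (by omega)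
    set E := ArtinHasse p ℚ with hE
    set M := p * m' with hM
    have hMpos : 0 < M := hm
    have hMdiv : M / p = m' := Nat.mul_div_cancel_left m' hppos
    -- the truncation as a polynomial over the subring
    set c : ℕ → Dsub p := fun j =>
      if h : j < M then ⟨coeff j E, ih j h⟩ else 0 with hc
    set P₀ : Polynomial (Dsub p) :=
      ∑ j ∈ Finset.range M, Polynomial.C (c j) * Polynomial.X ^ j with hP₀
    set P : Polynomial ℚ := P₀.map (Dsub p).subtype with hP
    have hPcoeff : ∀ i, P.coeff i = if i < M then coeff i E else 0 := by
      intro i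
      rw [hP, Polynomial.coeff_map, hP₀, coeff_rangeSum]
      by_cases h : i < M
      · rw [if_pos h, if_pos h, hc]
        simp only
        rw [dif_pos h]
        rfl
      · rw [if_neg h, if_neg h, map_zero]
    have hP0 : P.coeff 0 = 1 := by
      rw [hPcoeff 0, if_pos hMpos, hE, coeff_zero_E]
    set B : ℚ⟦X⟧ := PowerSeries.mk (fun i => coeff (i + M) E) with hB
    have hEPB : E = (P : ℚ⟦X⟧) + X ^ M * B := by
      ext i
      rw [map_add, Polynomial.coeff_coe, hPcoeff]
      by_cases h : i < M
      · rw [if_pos h,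
          PowerSeries.X_pow_dvd_iff.mp (dvd_mul_right ((X : ℚ⟦X⟧) ^ M) B) i h, add_zero]
      · rw [if_neg h, zero_add]
        obtain ⟨i', rfl⟩ : ∃ i', i = i' + M := ⟨i - M, by omega⟩
        rw [PowerSeries.coeff_X_pow_mul, hB, coeff_mk]
    have hconstB : constantCoeff B = coeff M E := by
      rw [hB, ← PowerSeries.coeff_zero_eq_constantCoeff_apply, coeff_mk, Nat.zero_add]
    -- the coefficient of `E^p` at `M`
    have hchoose : p.choose (p - 1) = p := by
      rw [← Nat.choose_symm (by omega : p - 1 ≤ p), show p - (p - 1) = 1 by omega,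
        Nat.choose_one_right]
    have hpow : coeff M (((P : ℚ⟦X⟧) + X ^ M * B) ^ p)
        = coeff M ((P : ℚ⟦X⟧) ^ p) + (p : ℚ) * coeff M E := by
      rw [add_pow, map_sum, show p + 1 = (p - 1) + 1 + 1 by omega,
        Finset.sum_range_succ, Finset.sum_range_succ]
      have hzero : ∀ k ∈ Finset.range (p - 1),
          coeff M ((P : ℚ⟦X⟧) ^ k * (X ^ M * B) ^ (p - k) * ((p.choose k : ℕ) : ℚ⟦X⟧)) = 0 := by
        intro k hk
        have hk' : k < p - 1 := Finset.mem_range.mp hk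
        have h2 : 2 ≤ p - k := by omega
        have hdvd2 : (X : ℚ⟦X⟧) ^ (M * (p - k)) ∣
            (P : ℚ⟦X⟧) ^ k * (X ^ M * B) ^ (p - k) * ((p.choose k : ℕ) : ℚ⟦X⟧) :=
          ⟨(P : ℚ⟦X⟧) ^ k * B ^ (p - k) * ((p.choose k : ℕ) : ℚ⟦X⟧), by
            rw [mul_pow, ← pow_mul]; ring⟩
        have hlt : M < M * (p - k) := by
          have h3 : 2 * M ≤ (p - k) * M := Nat.mul_le_mul_right M h2
          have h4 : (p - k) * M = M * (p - k) := Nat.mul_comm _ _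
          omega
        exact PowerSeries.X_pow_dvd_iff.mp hdvd2 M hlt
      rw [Finset.sum_eq_zero hzero, zero_add]
      have hterm1 : coeff M ((P : ℚ⟦X⟧) ^ (p - 1) * (X ^ M * B) ^ (p - (p - 1)) *
          ((p.choose (p - 1) : ℕ) : ℚ⟦X⟧)) = (p : ℚ) * coeff M E := by
        rw [show p - (p - 1) = 1 by omega, pow_one, hchoose]
        rw [show (P : ℚ⟦X⟧) ^ (p - 1) * (X ^ M * B) * ((p : ℕ) : ℚ⟦X⟧)
            = ((p : ℕ) : ℚ⟦X⟧) * (X ^ M * (B * (P : ℚ⟦X⟧) ^ (p - 1))) by ring]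
        rw [coeff_natCast_mul, PowerSeries.coeff_X_pow_mul', if_pos le_rfl, Nat.sub_self,
          PowerSeries.coeff_zero_eq_constantCoeff_apply, map_mul, map_pow, hconstB]
        have : constantCoeff (P : ℚ⟦X⟧) = 1 := by
          rw [← PowerSeries.coeff_zero_eq_constantCoeff_apply, Polynomial.coeff_coe, hP0]
        rw [this, one_pow, mul_one]
      have hterm2 : coeff M ((P : ℚ⟦X⟧) ^ p * (X ^ M * B) ^ (p - p) *
          ((p.choose p : ℕ) : ℚ⟦X⟧)) = coeff M ((P : ℚ⟦X⟧) ^ p) := by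
        rw [Nat.sub_self, pow_zero, Nat.choose_self, Nat.cast_one, mul_one, mul_one]
      rw [show p - 1 + 1 = p by omega, hterm1, hterm2]
      ring
    have hkey1 : coeff M (E ^ p)
        = coeff M ((P : ℚ⟦X⟧) ^ p) + (p : ℚ) * coeff M E := by
      conv_lhs => rw [hEPB]
      exact hpow
    -- the coefficient of `E(x^p)·exp(px)` at `M`
    set Rp := rescale (p : ℚ) (exp ℚ) with hRp
    set Q : ℚ⟦X⟧ := PowerSeries.mk (fun j => coeff (j + 1) Rp) with hQ
    have hRpQ : Rp = 1 + X * Q := by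
      ext i
      cases i with
      | zero =>
        rw [map_add, PowerSeries.coeff_zero_X_mul, add_zero, hRp, coeff_Rp]
        simp
      | succ n =>
        rw [map_add, coeff_succ_X_mul, hQ, coeff_mk, PowerSeries.coeff_one,
          if_neg (Nat.succ_ne_zero n), zero_add]
    set T : ℚ := ∑ ij ∈ Finset.HasAntidiagonal.antidiagonal (M - 1),
      coeff ij.1 (psub p E) * ((p : ℚ) ^ ij.2 / (Nat.factorial (ij.2 + 1) : ℚ)) with hT
    have hTD : D p T := by
      refine D_sum fun ij hij => ?_
      refine D_mul ?_ (D_pexp p ij.2)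
      rw [coeff_psub]
      split
      · refine ih _ ?_
        have h1 := Nat.div_le_self ij.1 p
        have h2 := Finset.HasAntidiagonal.antidiagonal.fst_le hij
        omega
      · exact D_zero
    have hcoeffM_psub : coeff M (psub p E) = coeff m' E := by
      rw [coeff_psub, if_pos ⟨m', hM⟩, hMdiv]
    have hF2 : coeff M (psub p E * Rp) = coeff m' E + (p : ℚ) * T := by
      have hsp : psub p E * Rp = psub p E + X * (psub p E * Q) := by
        rw [hRpQ]; ring
      rw [hsp, map_add, hcoeffM_psub, show M = M - 1 + 1 by omega, coeff_succ_X_mul,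
        PowerSeries.coeff_mul, hT, Finset.mul_sum]
      congr 1
      refine Finset.sum_congr rfl fun ij hij => ?_
      rw [hQ, coeff_mk, hRp, coeff_Rp, pow_succ, Nat.factorial_succ]
      push_cast
      have hf0 : ((Nat.factorial ij.2 : ℚ)) ≠ 0 := Nat.cast_ne_zero.mpr (Nat.factorial_ne_zero _)
      field_simp
    -- reduction of the polynomial coefficient, via Frobenius
    set cP : Dsub p := (P₀ ^ p).coeff M with hcP
    have hcPval : coeff M ((P : ℚ⟦X⟧) ^ p) = (cP : ℚ) := by
      rw [← Polynomial.coe_pow, Polynomial.coeff_coe, hP, ← Polynomial.map_pow,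
        Polynomial.coeff_map]
      rfl
    have hcPred : ratRed p (cP : ℚ) = ratRed p (coeff m' E) := by
      have hfrob : (P₀.map (redHom p)) ^ p
          = Polynomial.expand (ZMod p) p (P₀.map (redHom p)) := by
        rw [← Polynomial.map_frobenius_expand p (P₀.map (redHom p)), ZMod.frobenius_zmod,
          Polynomial.map_id]
      calc ratRed p (cP : ℚ) = ((P₀.map (redHom p)) ^ p).coeff M := by
            rw [← Polynomial.map_pow, Polynomial.coeff_map, hcP]
            rfl
        _ = (Polynomial.expand (ZMod p) p (P₀.map (redHom p))).coeff M := by rw [hfrob]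
        _ = (P₀.map (redHom p)).coeff m' := by
            rw [Polynomial.coeff_expand hppos, if_pos ⟨m', hM⟩, hMdiv]
        _ = ratRed p (coeff m' E) := by
            rw [Polynomial.coeff_map, hP₀, coeff_rangeSum, if_pos hm'lt, hc]
            simp only
            rw [dif_pos hm'lt]
            rfl
    -- conclude
    have hfrobE := congrArg (coeff M) (frobenius_E p)
    set b : ℚ := (coeff m' E + (p : ℚ) * T) - (cP : ℚ) with hb
    have hm'D : D p (coeff m' E) := ih m' (by omega)
    have hbD : D p b := D_sub (D_add hm'D (D_mul (D_natCast p) hTD)) cP.2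
    have hbred : ratRed p b = 0 := by
      rw [hb, ratRed_sub (D_add hm'D (D_mul (D_natCast p) hTD)) cP.2,
        ratRed_add hm'D (D_mul (D_natCast p) hTD),
        ratRed_mul (D_natCast p) hTD, ratRed_natCast, ZMod.natCast_self, zero_mul, add_zero,
        hcPred, sub_self]
    have hpam : (p : ℚ) * coeff M E = b := by
      rw [← hE, ← hRp] at hfrobE
      rw [hb]
      linarith [hkey1, hfrobE, hF2, hcPval]
    exact D_of_p_mul hbD hbred hpam
  · -- recursion case
    have hrec := congrArg (coeff m) (X_mul_deriv_E p)
    rw [coeff_X_mul_derivativeFun, PowerSeries.coeff_mul] at hrec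
    have hterm : ∀ ij ∈ Finset.HasAntidiagonal.antidiagonal m,
        D p (coeff ij.1 (Yq p) * coeff ij.2 (ArtinHasse p ℚ)) := by
      intro ij hij
      have hijm : ij.1 + ij.2 = m := Finset.HasAntidiagonal.mem_antidiagonal.mp hij
      by_cases h1 : ij.1 = 0
      · rw [h1, PowerSeries.coeff_zero_eq_constantCoeff_apply, constantCoeff_Yq, zero_mul]
        exact D_zero
      · refine D_mul ?_ (ih ij.2 (by omega))
        rw [Yq_def, coeff_mk]
        split
        · exact D_one
        · exact D_zero
    have hD := D_sum hterm
    have hmq : ((m : ℚ)) ≠ 0 := Nat.cast_ne_zero.mpr (by omega)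
    have ha : coeff m (ArtinHasse p ℚ)
        = (∑ ij ∈ Finset.HasAntidiagonal.antidiagonal m, coeff ij.1 (Yq p) * coeff ij.2 (ArtinHasse p ℚ)) / m := by
      rw [← hrec, mul_comm, mul_div_assoc, div_self hmq, mul_one]
    rw [ha]
    exact D_div_nat hD hndvd (by omega)

end part4

end AHaux

/-- The logarithmic-derivative equation `x·Ē_p′(x) = ȳ·Ē_p(x)` in `𝔽_p⟦x⟧`. -/
theorem EbarP_deriv (p : ℕ) [Fact p.Prime] :
    PowerSeries.X * (EbarP p).derivativeFun = ybar p * EbarP p := by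
  ext m
  rw [AHaux.coeff_X_mul_derivativeFun, PowerSeries.coeff_mul]
  have hcoeff : ∀ i, PowerSeries.coeff i (EbarP p)
      = ratRed p (PowerSeries.coeff i (ArtinHasse p ℚ)) := fun i => by
    rw [EbarP, PowerSeries.coeff_mk]
  have hybar : ∀ i, PowerSeries.coeff i (ybar p)
      = ratRed p (PowerSeries.coeff i (AHaux.Yq p)) := by
    intro i
    rw [ybar, PowerSeries.coeff_mk, AHaux.Yq_def, PowerSeries.coeff_mk]
    by_cases hex : ∃ k : ℕ, i = p ^ k
    · rw [if_pos hex, if_pos hex, AHaux.ratRed_one]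
    · rw [if_neg hex, if_neg hex, AHaux.ratRed_zero]
  have hYD : ∀ i, AHaux.D p (PowerSeries.coeff i (AHaux.Yq p)) := by
    intro i
    rw [AHaux.Yq_def, PowerSeries.coeff_mk]
    split
    · exact AHaux.D_one
    · exact AHaux.D_zero
  have hDterm : ∀ ij ∈ Finset.HasAntidiagonal.antidiagonal m,
      AHaux.D p (PowerSeries.coeff ij.1 (AHaux.Yq p)
        * PowerSeries.coeff ij.2 (ArtinHasse p ℚ)) :=
    fun ij _ => AHaux.D_mul (hYD ij.1) (AHaux.D_coeff_E p ij.2)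
  have hrec := congrArg (PowerSeries.coeff m) (AHaux.X_mul_deriv_E p)
  rw [AHaux.coeff_X_mul_derivativeFun, PowerSeries.coeff_mul] at hrec
  calc (m : ZMod p) * PowerSeries.coeff m (EbarP p)
      = ratRed p ((m : ℚ) * PowerSeries.coeff m (ArtinHasse p ℚ)) := by
        rw [hcoeff, AHaux.ratRed_mul (AHaux.D_natCast m) (AHaux.D_coeff_E p m),
          AHaux.ratRed_natCast]
    _ = ratRed p (∑ ij ∈ Finset.HasAntidiagonal.antidiagonal m, PowerSeries.coeff ij.1 (AHaux.Yq p)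
          * PowerSeries.coeff ij.2 (ArtinHasse p ℚ)) := by rw [hrec]
    _ = ∑ ij ∈ Finset.HasAntidiagonal.antidiagonal m, ratRed p (PowerSeries.coeff ij.1 (AHaux.Yq p)
          * PowerSeries.coeff ij.2 (ArtinHasse p ℚ)) := AHaux.ratRed_sum hDterm
    _ = ∑ ij ∈ Finset.HasAntidiagonal.antidiagonal m, PowerSeries.coeff ij.1 (ybar p)
          * PowerSeries.coeff ij.2 (EbarP p) := by
        refine Finset.sum_congr rfl fun ij _ => ?_
        rw [AHaux.ratRed_mul (hYD ij.1) (AHaux.D_coeff_E p ij.2), hybar, hcoeff]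
end

section
/- Let f(x) = ∑ c_i x^i ∈ 𝔽_p[x] with f(0)=0, and define its primitive part f*(x) = ∑_{p∤i} (∑_{k≥0} c_{i p^k}^{1/p^k}) x^i. Then f* = 0 if and only if f(x) = g(x)^p − g(x) for some g ∈ 𝔽_p[x]. -/
open Polynomial Finset

variable {p : ℕ} [Fact p.Prime]

lemma coeff_sum_CX (M : ℕ) (a : ℕ → ZMod p) (n : ℕ) :
    (∑ m ∈ Finset.range M, Polynomial.C (a m) * Polynomial.X ^ m).coeff n
      = if n < M then a n else 0 := by
  rw [Polynomial.finset_sum_coeff]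
  simp only [Polynomial.coeff_C_mul, Polynomial.coeff_X_pow, mul_ite, mul_one, mul_zero]
  rw [Finset.sum_ite_eq (Finset.range M) n a]
  simp [Finset.mem_range]

lemma coeff_pow_p (g : Polynomial (ZMod p)) (n : ℕ) :
    (g ^ p).coeff n = if p ∣ n then g.coeff (n / p) else 0 := by
  have h2 : g ^ p = Polynomial.expand (ZMod p) p g := by
    rw [← Polynomial.map_frobenius_expand (p := p) g, ZMod.frobenius_zmod, Polynomial.map_id]
  rw [h2, Polynomial.coeff_expand (Fact.out : p.Prime).pos]

/-- The primitive part `f* = ∑_{i≥1, p∤i} (∑_{k≥0} c_{i pᵏ}) xⁱ` of `f = ∑ cᵢ xⁱ ∈ 𝔽_p[x]`. -/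
noncomputable def pstar (p : ℕ) (f : Polynomial (ZMod p)) : Polynomial (ZMod p) :=
  letI := Classical.propDecidable
  ∑ i ∈ Finset.range (f.natDegree + 1), if ¬ p ∣ i then
      Polynomial.C (∑ k ∈ Finset.range (f.natDegree + 1), f.coeff (i * p ^ k))
        * Polynomial.X ^ i
    else 0

lemma pstar_coeff (f : Polynomial (ZMod p)) (n : ℕ) :
    (pstar p f).coeff n = if n < f.natDegree + 1 ∧ ¬ p ∣ n then
      ∑ k ∈ Finset.range (f.natDegree + 1), f.coeff (n * p ^ k) else 0 := by
  classical
  unfold pstar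
  have : ∀ i ∈ Finset.range (f.natDegree + 1),
      (letI := Classical.propDecidable; if ¬ p ∣ i then
        Polynomial.C (∑ k ∈ Finset.range (f.natDegree + 1), f.coeff (i * p ^ k))
          * Polynomial.X ^ i else 0)
      = Polynomial.C (if ¬ p ∣ i then
          (∑ k ∈ Finset.range (f.natDegree + 1), f.coeff (i * p ^ k)) else 0)
          * Polynomial.X ^ i := by
    intro i _
    split_ifs <;> simp
  rw [Finset.sum_congr rfl this, coeff_sum_CX]
  split_ifs with h1 h2 h3 <;> first | rfl | tauto

lemma aux_lt {n : ℕ} (hn : 1 ≤ n) {D E : ℕ} (hDE : D ≤ E) : D < n * p ^ E := by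
  have h2 : 2 ≤ p := (Fact.out : p.Prime).two_le
  calc D < 2 ^ E := lt_of_le_of_lt hDE (Nat.lt_two_pow_self (n := E))
    _ ≤ p ^ E := Nat.pow_le_pow_left h2 E
    _ ≤ n * p ^ E := Nat.le_mul_of_pos_left _ hn

lemma sum_coeff_sub_pow (g : Polynomial (ZMod p)) {n : ℕ} (hn : ¬ p ∣ n) (N : ℕ) :
    ∑ k ∈ Finset.range (N + 1), (g ^ p - g).coeff (n * p ^ k)
      = - g.coeff (n * p ^ N) := by
  have hp2 := (Fact.out : p.Prime).pos
  have key : ∀ k, (g ^ p - g).coeff (n * p ^ (k + 1))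
      = g.coeff (n * p ^ k) - g.coeff (n * p ^ (k + 1)) := by
    intro k
    rw [Polynomial.coeff_sub, coeff_pow_p]
    have hd : p ∣ n * p ^ (k + 1) := ⟨n * p ^ k, by ring⟩
    rw [if_pos hd]
    congr 2
    rw [pow_succ, ← mul_assoc, Nat.mul_div_cancel _ hp2]
  have h0 : (g ^ p - g).coeff (n * p ^ 0) = - g.coeff n := by
    rw [Polynomial.coeff_sub, coeff_pow_p, if_neg, zero_sub]
    · rw [pow_zero, mul_one]
    · rw [pow_zero, mul_one]; exact hn
  rw [Finset.sum_range_succ' (fun k => (g ^ p - g).coeff (n * p ^ k)) N, h0,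
    Finset.sum_congr rfl (fun k _ => key k),
    Finset.sum_range_sub' (fun k => g.coeff (n * p ^ k))]
  rw [pow_zero, mul_one]
  ring

/-- For `f ∈ x·𝔽_p[x]`, the primitive part `f*` vanishes iff `f = g^p − g` for some
`g ∈ 𝔽_p[x]`. -/
theorem pstar_eq_zero_iff (p : ℕ) [Fact p.Prime] (f : Polynomial (ZMod p))
    (hf0 : f.coeff 0 = 0) :
    pstar p f = 0 ↔ ∃ g : Polynomial (ZMod p), f = g ^ p - g := by
  classical
  have hp2 := (Fact.out : p.Prime).pos
  constructor
  · intro h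
    set D := f.natDegree with hD
    set T : ℕ → ZMod p := fun m => ∑ k ∈ Finset.range (D + 1), f.coeff (m * p ^ (k + 1))
      with hTdef
    -- vanishing of T for large index
    have hTzero : ∀ m, D < m → T m = 0 := by
      intro m hm
      apply Finset.sum_eq_zero
      intro k _
      apply Polynomial.coeff_eq_zero_of_natDegree_lt
      calc f.natDegree < m := hm
        _ ≤ m * p ^ (k + 1) := Nat.le_mul_of_pos_right _ (pow_pos hp2 _)
    set g : Polynomial (ZMod p) :=
      ∑ m ∈ Finset.range (D + 1), Polynomial.C (T m) * Polynomial.X ^ m with hgdef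
    have hgc : ∀ m, g.coeff m = T m := by
      intro m
      rw [hgdef, coeff_sum_CX]
      split_ifs with hm
      · rfl
      · exact (hTzero m (by omega)).symm
    -- the pstar sums vanish
    have hS : ∀ i, ¬ p ∣ i → ∑ k ∈ Finset.range (D + 1), f.coeff (i * p ^ k) = 0 := by
      intro i hi
      by_cases hiD : i < D + 1
      · have h1 := pstar_coeff f i
        rw [h, Polynomial.coeff_zero, if_pos ⟨hiD, hi⟩] at h1
        exact h1.symm
      · apply Finset.sum_eq_zero
        intro k _
        apply Polynomial.coeff_eq_zero_of_natDegree_lt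
        calc f.natDegree < i := by omega
          _ ≤ i * p ^ k := Nat.le_mul_of_pos_right _ (pow_pos hp2 _)
    refine ⟨g, ?_⟩
    ext n
    rw [Polynomial.coeff_sub, coeff_pow_p, hgc]
    by_cases hdvd : p ∣ n
    · rw [if_pos hdvd, hgc]
      rcases Nat.eq_zero_or_pos n with h0 | h1
      · subst h0
        simp [hf0]
      · have hn1 : 1 ≤ n := h1
        obtain ⟨q, hq⟩ := hdvd
        have hqdiv : n / p = q := by rw [hq, Nat.mul_div_cancel_left _ hp2]
        rw [hqdiv]
        have e1 : ∑ k ∈ Finset.range (D + 2), f.coeff (n * p ^ k)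
            = T n + f.coeff n := by
          rw [Finset.sum_range_succ' (fun k => f.coeff (n * p ^ k)) (D + 1)]
          rw [pow_zero, mul_one]
        have e2 : ∑ k ∈ Finset.range (D + 2), f.coeff (n * p ^ k)
            = ∑ k ∈ Finset.range (D + 1), f.coeff (n * p ^ k) := by
          rw [Finset.sum_range_succ]
          rw [Polynomial.coeff_eq_zero_of_natDegree_lt (aux_lt hn1 (Nat.le_succ D)),
            add_zero]
        have e3 : ∑ k ∈ Finset.range (D + 1), f.coeff (n * p ^ k) = T q := by
          apply Finset.sum_congr rfl
          intro k _
          congr 1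
          rw [hq]; ring
        have e4 : T q = T n + f.coeff n := by rw [← e3, ← e2, e1]
        rw [e4]; ring
    · rw [if_neg hdvd, hgc n]
      have hn1 : 1 ≤ n := Nat.pos_of_ne_zero (fun e => hdvd (e ▸ dvd_zero p))
      have e1 : ∑ k ∈ Finset.range (D + 2), f.coeff (n * p ^ k)
          = T n + f.coeff n := by
        rw [Finset.sum_range_succ' (fun k => f.coeff (n * p ^ k)) (D + 1)]
        rw [pow_zero, mul_one]
      have e2 : ∑ k ∈ Finset.range (D + 2), f.coeff (n * p ^ k) = 0 := by
        rw [Finset.sum_range_succ,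
          Polynomial.coeff_eq_zero_of_natDegree_lt (aux_lt hn1 (Nat.le_succ D)),
          add_zero]
        exact hS n hdvd
      have : T n + f.coeff n = 0 := by rw [← e1, e2]
      linear_combination this
  · rintro ⟨g, rfl⟩
    set D := (g ^ p - g).natDegree with hD
    ext n
    rw [pstar_coeff, Polynomial.coeff_zero]
    split_ifs with h
    · obtain ⟨hnD, hnd⟩ := h
      have hn1 : 1 ≤ n := Nat.pos_of_ne_zero (fun e => hnd (e ▸ dvd_zero p))
      rw [sum_coeff_sub_pow g hnd D, neg_eq_zero]
      apply Polynomial.coeff_eq_zero_of_natDegree_lt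
      rcases Nat.eq_zero_or_pos g.natDegree with h0 | h1
      · rw [h0]
        exact Nat.mul_pos hn1 (pow_pos hp2 _)
      · have hlt : g.natDegree < (g ^ p).natDegree := by
          rw [Polynomial.natDegree_pow]
          nlinarith [(Fact.out : p.Prime).two_le]
        have hdeg : D = p * g.natDegree := by
          rw [hD, Polynomial.natDegree_sub_eq_left_of_natDegree_lt hlt,
            Polynomial.natDegree_pow]
        have hgle : g.natDegree ≤ D := by
          rw [hdeg]
          nlinarith [(Fact.out : p.Prime).two_le]
        exact lt_of_le_of_lt hgle (aux_lt hn1 le_rfl)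
    · rfl
end
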